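/- arXiv:1004.0241 — 11 statements merged into one kernel-verified Lean document; each statement's English description precedes it below -/
import Mathlib

section
/- Let K be a field and n a positive integer. If A is a K-subalgebra of the matrix algebra M_n(K) with A ≠ M_n(K), then the codimension of A as a K-linear subspace of M_n(K) is at least n-1. -/
/-!
Let `B ⊊ End V` and `n = dim V`. If `V` is a simple `B`-module, pick a rank-one map
`x ↦ φ x • v₀` outside `B` (rank-one maps span `End V`). As `b ∘ (x ↦ φ x • v) = (x ↦ φ x • b v)`,
the `v` with `(x ↦ φ x • v) ∈ B` form a proper `B`-submodule, hence `0`, so `V` embeds in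
`End V ⧸ B` and the codimension of `B` is at least `n`. Otherwise `B` stabilises a subspace `W` of
dimension `0 < k < n`; the stabiliser of `W` is the kernel of the surjection
`g ↦ (mkQ ∘ g ∘ subtype : W → V ⧸ W)`, so its codimension is `k (n - k) ≥ n - 1`.
-/

open Module LinearMap

namespace Submodule

variable {K V : Type*} [Field K] [AddCommGroup V] [Module K V] (W : Submodule K V)

def offDiagonalBlock : Module.End K V →ₗ[K] W →ₗ[K] V ⧸ W :=
  lcomp K (V ⧸ W) W.subtype ∘ₗ compRight K W.mkQ

@[simp]
theorem offDiagonalBlock_apply (g : Module.End K V) (w : W) :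
    W.offDiagonalBlock g w = W.mkQ (g w) :=
  rfl

theorem ker_offDiagonalBlock : ker W.offDiagonalBlock = compatibleMaps W W := by
  ext g
  simp [compatibleMaps, SetLike.le_def, LinearMap.ext_iff]

theorem offDiagonalBlock_surjective : Function.Surjective W.offDiagonalBlock := by
  intro h
  obtain ⟨s, hs⟩ := W.mkQ.exists_rightInverse_of_surjective W.range_mkQ
  obtain ⟨g, hg⟩ := LinearMap.exists_extend (s ∘ₗ h)
  refine ⟨g, LinearMap.ext fun w => ?_⟩
  calc W.offDiagonalBlock g w = W.mkQ (s (h w)) := congrArg W.mkQ (LinearMap.congr_fun hg w)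
    _ = h w := LinearMap.congr_fun hs (h w)

theorem finrank_compatibleMaps_add [FiniteDimensional K V] :
    finrank K (compatibleMaps W W) + finrank K W * finrank K (V ⧸ W) =
      finrank K (Module.End K V) := by
  rw [← W.ker_offDiagonalBlock, ← Module.finrank_linearMap, ← finrank_top K (W →ₗ[K] V ⧸ W),
    ← range_eq_top.2 W.offDiagonalBlock_surjective, add_comm]
  exact W.offDiagonalBlock.finrank_range_add_finrank_ker

end Submodule

namespace Module.End

variable {K V : Type*} [Field K] [AddCommGroup V] [Module K V]

theorem exists_smulRight_notMem [FiniteDimensional K V] {S : Submodule K (Module.End K V)}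
    (hS : S ≠ ⊤) : ∃ (φ : Dual K V) (v : V), smulRight φ v ∉ S := by
  by_contra! h
  refine hS (Submodule.eq_top_iff'.2 fun g => ?_)
  obtain ⟨t, rfl⟩ := (dualTensorHomEquiv K V V).surjective g
  induction t using TensorProduct.induction_on with
  | zero => simp
  | tmul φ v => exact h φ v
  | add s t hs ht => simpa using add_mem hs ht

theorem finrank_subalgebra_add_finrank_le_of_isSimpleModule [FiniteDimensional K V]
    {B : Subalgebra K (Module.End K V)} [IsSimpleModule B V] (hB : B ≠ ⊤) :
    finrank K B + finrank K V ≤ finrank K (Module.End K V) := by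
  obtain ⟨φ, v₀, hv₀⟩ :=
    exists_smulRight_notMem (S := Subalgebra.toSubmodule B) (by simpa using hB)
  set ρ := (Subalgebra.toSubmodule B).mkQ ∘ₗ smulRightₗ φ
  have hcomm (b : B) (v : V) : (b : Module.End K V) * smulRight φ v = smulRight φ (b • v) := by
    ext; simp [Subalgebra.smul_def]
  let S : Submodule B V :=
    { ker ρ with
      smul_mem' := fun b v hv => by
        simpa [ρ, ← hcomm] using B.mul_mem b.2 (by simpa [ρ] using hv : smulRight φ v ∈ B) }
  have hS : S = ⊥ := (IsSimpleOrder.eq_bot_or_eq_top S).resolve_right fun h => by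
    have hv : v₀ ∈ ker ρ := show v₀ ∈ S from h ▸ Submodule.mem_top
    exact hv₀ (by simpa [ρ] using hv)
  have hρ : ker ρ = ⊥ := (Submodule.restrictScalars_eq_bot_iff K _ _).2 hS
  have hV_le := ρ.finrank_le_finrank_of_injective (ker_eq_bot.1 hρ)
  have hquot := (Subalgebra.toSubmodule B).finrank_quotient_add_finrank
  rw [Subalgebra.finrank_toSubmodule] at hquot
  omega

theorem toSubmodule_le_compatibleMaps {B : Subalgebra K (Module.End K V)} (W : Submodule B V) :
    Subalgebra.toSubmodule B ≤
      Submodule.compatibleMaps (W.restrictScalars K) (W.restrictScalars K) :=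
  fun b hb _ hw => W.smul_mem (⟨b, hb⟩ : B) hw

theorem finrank_subalgebra_add_finrank_mul_le [FiniteDimensional K V]
    {B : Subalgebra K (Module.End K V)} (W : Submodule B V) :
    finrank K B + finrank K (W.restrictScalars K) * finrank K (V ⧸ W.restrictScalars K) ≤
      finrank K (Module.End K V) := by
  have hB_le := Submodule.finrank_mono (toSubmodule_le_compatibleMaps W)
  rw [Subalgebra.finrank_toSubmodule] at hB_le
  exact (Nat.add_le_add_right hB_le _).trans_eq (W.restrictScalars K).finrank_compatibleMaps_add

theorem finrank_subalgebra_add_finrank_sub_one_le [FiniteDimensional K V]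
    {B : Subalgebra K (Module.End K V)} (hB : B ≠ ⊤) :
    finrank K B + (finrank K V - 1) ≤ finrank K (Module.End K V) := by
  have : Nontrivial V := by
    by_contra h
    have := not_nontrivial_iff_subsingleton.1 h
    exact hB (Subsingleton.elim _ _)
  by_cases hV : IsSimpleModule B V
  · have := finrank_subalgebra_add_finrank_le_of_isSimpleModule hB
    omega
  obtain ⟨W, hW_bot, hW_top⟩ : ∃ W : Submodule B V, W ≠ ⊥ ∧ W ≠ ⊤ := by
    by_contra! h
    exact hV ((isSimpleModule_iff _ _).2 ⟨fun W => or_iff_not_imp_left.2 (h W)⟩)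
  have hblock := finrank_subalgebra_add_finrank_mul_le W
  set W' := W.restrictScalars K
  have hk : 1 ≤ finrank K W' := Submodule.one_le_finrank_iff.2 (by simpa [W'] using hW_bot)
  have hk' : finrank K W' < finrank K V := Submodule.finrank_lt (by simpa [W'] using hW_top)
  have hsum := W'.finrank_quotient_add_finrank
  have hprod : finrank K W' + finrank K (V ⧸ W') ≤ finrank K W' * finrank K (V ⧸ W') + 1 := by
    nlinarith
  omega

end Module.End

theorem subalgebra_codim_ge_general (K : Type*) [Field K] (n : ℕ)
    (A : Subalgebra K (Matrix (Fin n) (Fin n) K)) (hA : A ≠ ⊤) :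
    n - 1 ≤ n ^ 2 - Module.finrank K A := by
  let e := Matrix.toLinAlgEquiv' (R := K) (n := Fin n)
  have hB : A.map e.toAlgHom ≠ ⊤ := by
    intro h
    rw [← Subalgebra.comap_map_eq_self_of_injective (f := e.toAlgHom) e.injective A, h,
      Algebra.comap_top] at hA
    exact hA rfl
  have hcodim := Module.End.finrank_subalgebra_add_finrank_sub_one_le hB
  rw [← (e.subalgebraMap A).toLinearEquiv.finrank_eq, ← e.toLinearEquiv.finrank_eq,
    Module.finrank_matrix] at hcodim
  simp only [Fintype.card_fin, finrank_self, mul_one, ← sq, Module.finrank_fin_fun] at hcodim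
  omega

theorem subalgebra_codim_ge (K : Type*) [Field K] (n : ℕ) (hn : 0 < n)
    (A : Subalgebra K (Matrix (Fin n) (Fin n) K)) (hA : A ≠ ⊤) :
    n - 1 ≤ n ^ 2 - Module.finrank K A :=
  subalgebra_codim_ge_general K n A hA
end

section
/- Let K be a field, n ≥ 1, and V a linear subspace of M_n(K) with codimension strictly less than n-1. Then M_n(K) is spanned as a K-vector space by the set of products {AB : A ∈ V, B ∈ V}. -/
/-!
If the products do not span, the trace form yields a nonzero `C` with `tr (A * B * C) = 0` for
all `A, B ∈ V`. Then `V` is totally isotropic for `(A, B) ↦ tr (A * B * C)`, whose kernel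
`{B | B * C = 0}` has dimension `n (n - rank C)`; hence `2 dim V ≤ n² + n (n - rank C)`, and the
codimension bound forces `rank C = 1`, i.e. `C = x yᵀ`. Now `tr (A * B * C) = (yᵀ A) (B x)`, so
`{yᵀ A | A ∈ V}` and `{B x | B ∈ V}` are orthogonal and their dimensions add up to at most `n`,
while `{A | A x = 0, yᵀ A = 0}` has dimension `(n - 1)²`. Together `dim V ≤ (n - 1)² + n`,
that is, `V` has codimension at least `n - 1`.
-/

open Module Matrix LinearMap

section Finrank

variable {K E F : Type*} [Field K] [AddCommGroup E] [Module K E] [FiniteDimensional K E]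
  [AddCommGroup F] [Module K F]

theorem finrank_map_add_finrank_inf_ker (f : E →ₗ[K] F) (p : Submodule K E) :
    finrank K (p.map f) + finrank K ↥(p ⊓ ker f) = finrank K p := by
  rw [← range_domRestrict, ← Submodule.map_comap_subtype, Submodule.finrank_map_subtype_eq,
    ← ker_domRestrict]
  exact finrank_range_add_finrank_ker _

theorem two_mul_finrank_le_of_isotropic (β : E →ₗ[K] Dual K E) {V : Submodule K E}
    (hV : ∀ a ∈ V, ∀ b ∈ V, β a b = 0) :
    2 * finrank K V ≤ finrank K E + finrank K (ker β) := by
  have hmap : V.map β ≤ V.dualAnnihilator := by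
    rintro _ ⟨a, ha, rfl⟩
    exact (Submodule.mem_dualAnnihilator _).2 (hV a ha)
  have hrank := finrank_map_add_finrank_inf_ker β V
  have hann := Subspace.finrank_add_finrank_dualAnnihilator_eq V
  have hle₁ := Submodule.finrank_mono hmap
  have hle₂ := Submodule.finrank_mono (inf_le_right : V ⊓ ker β ≤ ker β)
  omega

theorem finrank_le_finrank_ker_inf_add_of_pairing_eq_zero [FiniteDimensional K F]
    (f : E →ₗ[K] Dual K F) (g : E →ₗ[K] F) {V : Submodule K E}
    (hV : ∀ a ∈ V, ∀ b ∈ V, f a (g b) = 0) :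
    finrank K V ≤ finrank K ↥(ker f ⊓ ker g) + finrank K F := by
  have horth : (V ⊓ ker g).map f ≤ (V.map g).dualAnnihilator := by
    rintro _ ⟨a, ha, rfl⟩
    rw [Submodule.mem_dualAnnihilator]
    rintro _ ⟨b, hb, rfl⟩
    exact hV a ha.1 b hb
  have hrank := finrank_map_add_finrank_inf_ker g V
  have hrank' := finrank_map_add_finrank_inf_ker f (V ⊓ ker g)
  have hann := Subspace.finrank_add_finrank_dualAnnihilator_eq (V.map g)
  have hle₁ := Submodule.finrank_mono horth
  have hle₂ := Submodule.finrank_mono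
    (show V ⊓ ker g ⊓ ker f ≤ ker f ⊓ ker g from fun _ h => ⟨h.2, h.1.2⟩)
  omega

theorem finrank_ker_compLeft (f : E →ₗ[K] F) (ι : Type*) [Fintype ι] :
    finrank K (ker (f.compLeft ι)) = Fintype.card ι * finrank K (ker f) := by
  have hinj : Function.Injective ((ker f).subtype.compLeft ι) :=
    fun a b h => funext fun i => Subtype.ext (congrFun h i)
  rw [ker_compLeft, ← Submodule.range_subtype (ker f), ← range_compLeft,
    finrank_range_of_inj hinj, finrank_pi_fintype, Finset.sum_const, Finset.card_univ,
    smul_eq_mul, Submodule.range_subtype]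

end Finrank

section Matrix

variable {K m : Type*} [Field K] [Fintype m]

variable (K m) in
noncomputable def traceDual : Matrix m m K →ₗ[K] Dual K (Matrix m m K) :=
  ((LinearMap.mul K (Matrix m m K)).compr₂ (traceLinearMap m K K)).flip

@[simp]
theorem traceDual_apply (C X : Matrix m m K) : traceDual K m C X = trace (X * C) := rfl

theorem traceDual_injective : Function.Injective (traceDual K m) := by
  intro C D h
  exact ext_iff_trace_mul_left.2 fun X => LinearMap.congr_fun h X

theorem traceDual_surjective : Function.Surjective (traceDual K m) :=
  (injective_iff_surjective_of_finrank_eq_finrank Subspace.dual_finrank_eq.symm).1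
    traceDual_injective

theorem finrank_ker_mulRight [DecidableEq m] (C : Matrix m m K) :
    finrank K (ker (LinearMap.mulRight K C)) = Fintype.card m * finrank K (ker C.vecMulLinear) :=
  finrank_ker_compLeft C.vecMulLinear m

theorem exists_eq_vecMulVec_of_finrank_range_vecMulLinear_le_one [DecidableEq m]
    {C : Matrix m m K} (h : finrank K (range C.vecMulLinear) ≤ 1) :
    ∃ x y : m → K, C = vecMulVec x y := by
  obtain ⟨v, hv⟩ := finrank_le_one_iff.1 h
  choose c hc using fun i => hv ⟨C.row i, single_one_vecMul i C ▸ mem_range_self _ _⟩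
  refine ⟨c, v, ext fun i j => ?_⟩
  simpa [vecMulVec_apply] using (congrFun (congrArg Subtype.val (hc i)) j).symm

theorem finrank_le_card_sq (V : Submodule K (Matrix m m K)) :
    finrank K V ≤ Fintype.card m ^ 2 := by
  have := Submodule.finrank_le V
  rwa [finrank_matrix, finrank_self, mul_one, ← sq] at this

theorem trace_mul_mul_vecMulVec (A B : Matrix m m K) (x y : m → K) :
    trace (A * B * vecMulVec x y) = (y ᵥ* A) ⬝ᵥ (B *ᵥ x) := by
  rw [mul_vecMulVec, trace_vecMulVec, ← mulVec_mulVec, dotProduct_comm, dotProduct_mulVec]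

theorem exists_dotProduct_eq_one [DecidableEq m] {x : m → K} (hx : x ≠ 0) :
    ∃ z, z ⬝ᵥ x = 1 := by
  obtain ⟨i, hi⟩ := Function.ne_iff.1 hx
  exact ⟨Pi.single i (x i)⁻¹, by simpa using inv_mul_cancel₀ hi⟩

end Matrix

section Products

variable {K m : Type*} [Field K] [Fintype m] [DecidableEq m] {V : Submodule K (Matrix m m K)}

theorem finrank_ker_vecMul_inf_ker_mulVec_add_le {x y : m → K} (hx : x ≠ 0) (hy : y ≠ 0) :
    finrank K ↥(ker (vecMulBilin K K y : Matrix m m K →ₗ[K] m → K) ⊓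
        ker ((mulVecBilin K K).flip x)) + 2 * Fintype.card m ≤ Fintype.card m ^ 2 + 1 := by
  obtain ⟨z, hz⟩ := exists_dotProduct_eq_one hx
  obtain ⟨w₀, hw₀⟩ := exists_dotProduct_eq_one hy
  let Φ := (vecMulBilin K K y : Matrix m m K →ₗ[K] m → K).prod ((mulVecBilin K K).flip x)
  let ℓ : (m → K) × (m → K) →ₗ[K] K :=
    (dotProductBilin K K).flip x ∘ₗ fst K _ _ - dotProductBilin K K y ∘ₗ snd K _ _
  have hℓ : Function.Surjective ℓ := fun c => ⟨(c • z, 0), by simp [ℓ, hz]⟩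
  have hrange : ker ℓ ≤ range Φ := by
    rintro ⟨w, u⟩ hwu
    replace hwu : w ⬝ᵥ x = y ⬝ᵥ u := by simpa [ℓ, sub_eq_zero] using hwu
    refine ⟨vecMulVec u z + vecMulVec w₀ (w - (y ⬝ᵥ u) • z), Prod.ext ?_ ?_⟩
    · simp [Φ, vecMul_add, vecMul_vecMulVec, dotProduct_comm y w₀, hw₀]
    · simp [Φ, vecMulVec_mulVec, hz, sub_dotProduct, hwu]
  have hΦ := finrank_range_add_finrank_ker Φ
  have hℓrank := finrank_range_add_finrank_ker ℓ
  have hle := Submodule.finrank_mono hrange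
  rw [ker_prod, finrank_matrix, finrank_self, mul_one] at hΦ
  rw [range_eq_top.2 hℓ, finrank_top, finrank_self, finrank_prod, finrank_pi] at hℓrank
  rw [sq]
  omega

theorem finrank_range_vecMulLinear_le_one
    (hV : Fintype.card m ^ 2 - finrank K V < Fintype.card m - 1) {C : Matrix m m K}
    (hC : ∀ A ∈ V, ∀ B ∈ V, trace (A * B * C) = 0) :
    finrank K (range C.vecMulLinear) ≤ 1 := by
  let β := traceDual K m ∘ₗ LinearMap.mulRight K C
  have hiso := two_mul_finrank_le_of_isotropic β fun B hB A hA => by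
    simpa [β, mul_assoc] using hC A hA B hB
  rw [ker_comp_of_ker_eq_bot _ (ker_eq_bot.2 traceDual_injective),
    finrank_ker_mulRight, finrank_matrix, finrank_self, mul_one] at hiso
  have hrank := finrank_range_add_finrank_ker C.vecMulLinear
  rw [finrank_pi] at hrank
  have hVle := finrank_le_card_sq V
  by_contra! hr
  set N := Fintype.card m
  have hsplit :
      N * finrank K (ker C.vecMulLinear) + N * finrank K (range C.vecMulLinear) = N * N := by
    rw [← mul_add, add_comm, hrank]
  have hlarge : N * 2 ≤ N * finrank K (range C.vecMulLinear) := Nat.mul_le_mul_left _ hr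
  rw [sq] at hV hVle
  omega

theorem eq_zero_of_trace_mul_mul_eq_zero
    (hV : Fintype.card m ^ 2 - finrank K V < Fintype.card m - 1) {C : Matrix m m K}
    (hC : ∀ A ∈ V, ∀ B ∈ V, trace (A * B * C) = 0) : C = 0 := by
  obtain ⟨x, y, rfl⟩ := exists_eq_vecMulVec_of_finrank_range_vecMulLinear_le_one
    (finrank_range_vecMulLinear_le_one hV hC)
  by_contra hxy
  have hx : x ≠ 0 := by rintro rfl; simp at hxy
  have hy : y ≠ 0 := by rintro rfl; simp at hxy
  have hpair := finrank_le_finrank_ker_inf_add_of_pairing_eq_zero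
    ((dotProductEquiv K m).toLinearMap ∘ₗ vecMulBilin K K y) ((mulVecBilin K K).flip x)
    fun A hA B hB => by simpa [trace_mul_mul_vecMulVec] using hC A hA B hB
  rw [LinearEquiv.ker_comp, finrank_pi] at hpair
  have hker := finrank_ker_vecMul_inf_ker_mulVec_add_le hx hy
  have hVle := finrank_le_card_sq V
  omega

end Products

theorem span_products_eq_top_general (K : Type*) [Field K] (n : ℕ)
    (V : Submodule K (Matrix (Fin n) (Fin n) K))
    (hV : n ^ 2 - Module.finrank K V < n - 1) :
    Submodule.span K {M : Matrix (Fin n) (Fin n) K | ∃ A ∈ V, ∃ B ∈ V, M = A * B} = ⊤ := by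
  rw [← Submodule.dualAnnihilator_eq_bot_iff, Submodule.eq_bot_iff]
  intro φ hφ
  obtain ⟨C, rfl⟩ := traceDual_surjective φ
  have hC : ∀ A ∈ V, ∀ B ∈ V, trace (A * B * C) = 0 := fun A hA B hB =>
    (Submodule.mem_dualAnnihilator _).1 hφ _ (Submodule.subset_span ⟨A, hA, B, hB, rfl⟩)
  rw [eq_zero_of_trace_mul_mul_eq_zero (by simpa using hV) hC, map_zero]

theorem span_products_eq_top (K : Type*) [Field K] (n : ℕ) (hn : 0 < n)
    (V : Submodule K (Matrix (Fin n) (Fin n) K))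
    (hV : n ^ 2 - Module.finrank K V < n - 1) :
    Submodule.span K {M : Matrix (Fin n) (Fin n) K | ∃ A ∈ V, ∃ B ∈ V, M = A * B} = ⊤ :=
  span_products_eq_top_general K n V hV
end

section
/- Let K be a field, n ≥ 1, and V a linear subspace of M_n(K) with codimension strictly less than n-1. Then the trace-zero matrices sl_n(K) are spanned by the commutators [A,B] = AB - BA with A, B ∈ V. -/
/-!
Let `W` be the span of the commutators of `V`. If `C` is orthogonal to `W` for the trace form
`(X, Y) ↦ tr (X Y)`, then `tr ((C A - A C) B) = tr (C (A B - B A)) = 0` for `A, B ∈ V`, so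
`ad C = [C, ·]` maps `V` into `V^⊥`, of dimension `codim V`; hence
`dim V ≤ codim V + dim ker (ad C)`.

A non-scalar `C` has `rank (ad C) ≥ 2n - 2`: pick `v` with `v, C v` independent, `g` with
`g, g C` independent, and `χ, z` with `χ ⬝ v = 0`, `χ ⬝ C v = 1`, `g ⬝ z = 0`, `g ⬝ C z = 1`.
Then `(t, u) ↦ ad C (t χᵀ + z uᵀ)` is injective on pairs with `u ⊥ v, C v`: applying it to `v`
gives `-t`, and multiplying by `g` on the left then gives `u`.

With `codim V < n - 1` these bounds are incompatible, so `W^⊥` consists of scalars and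
`W = W^⊥⊥ ⊇ (K • 1)^⊥ = sl_n`.
-/

open Matrix Module LinearMap

lemma Module.Dual.exists_apply_eq_zero_and_eq_one {K V : Type*} [Field K] [AddCommGroup V]
    [Module K V] {u w : V} (h : LinearIndependent K ![u, w]) :
    ∃ f : Dual K V, f u = 0 ∧ f w = 1 := by
  have hw : w ∉ K ∙ u := by
    rw [LinearIndependent.pair_symm_iff, linearIndependent_fin2] at h
    simpa [Submodule.mem_span_singleton] using h.2
  obtain ⟨f, hfw, hf⟩ := Submodule.exists_dual_map_eq_bot_of_notMem hw inferInstance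
  have hfu : f u = 0 := by
    have := Submodule.mem_map_of_mem (f := f) (Submodule.mem_span_singleton_self u)
    rwa [hf, Submodule.mem_bot] at this
  exact ⟨(f w)⁻¹ • f, by simp [hfu], by simp [hfw]⟩

lemma Submodule.finrank_le_finrank_map_add_finrank_ker {K M N : Type*} [Field K] [AddCommGroup M]
    [Module K M] [AddCommGroup N] [Module K N] [FiniteDimensional K M] (f : M →ₗ[K] N)
    (V : Submodule K M) : finrank K V ≤ finrank K (V.map f) + finrank K (ker f) := by
  have hrank := finrank_range_add_finrank_ker (f.domRestrict V)
  rw [range_domRestrict] at hrank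
  have hker : (ker (f.domRestrict V)).map V.subtype ≤ ker f := by
    rintro _ ⟨A, hA, rfl⟩
    exact hA
  have := Submodule.finrank_mono hker
  rw [Submodule.finrank_map_subtype_eq] at this
  omega

namespace Matrix

variable {ι K : Type*} [Fintype ι] [DecidableEq ι] [Field K]

def traceMulForm : LinearMap.BilinForm K (Matrix ι ι K) :=
  (LinearMap.mul K (Matrix ι ι K)).compr₂ (traceLinearMap ι K K)

@[simp]
lemma traceMulForm_apply (X Y : Matrix ι ι K) : traceMulForm X Y = (X * Y).trace := rfl

lemma traceMulForm_isSymm : (traceMulForm : LinearMap.BilinForm K (Matrix ι ι K)).IsSymm :=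
  ⟨trace_mul_comm⟩

lemma traceMulForm_nondegenerate :
    (traceMulForm : LinearMap.BilinForm K (Matrix ι ι K)).Nondegenerate :=
  ⟨fun X hX => ext_iff_trace_mul_right.mpr fun Y => by simpa using hX Y,
    fun Y hY => ext_iff_trace_mul_left.mpr fun X => by simpa using hY X⟩

lemma traceMulForm_orthogonal_span_one :
    traceMulForm.orthogonal (K ∙ (1 : Matrix ι ι K)) = ker (traceLinearMap ι K K) := by
  ext X
  simp only [BilinForm.mem_orthogonal_iff, Submodule.mem_span_singleton, forall_exists_index,
    forall_apply_eq_imp_iff, traceMulForm_apply, smul_mul, one_mul, trace_smul, smul_eq_mul,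
    mem_ker, traceLinearMap_apply]
  exact ⟨fun h => by simpa using h 1, fun h a => by rw [h, mul_zero]⟩

def ad (C : Matrix ι ι K) : Matrix ι ι K →ₗ[K] Matrix ι ι K :=
  mulLeft K C - mulRight K C

lemma ad_apply (C X : Matrix ι ι K) : ad C X = C * X - X * C := rfl

lemma trace_ad_mul (C A B : Matrix ι ι K) : (ad C A * B).trace = (C * (A * B - B * A)).trace := by
  simp only [ad_apply, sub_mul, mul_sub, trace_sub, Matrix.mul_assoc]
  rw [trace_mul_comm A (C * B), Matrix.mul_assoc]

lemma map_ad_le_traceMulForm_orthogonal {V : Submodule K (Matrix ι ι K)} {C : Matrix ι ι K}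
    (hC : ∀ A ∈ V, ∀ B ∈ V, (C * (A * B - B * A)).trace = 0) :
    V.map (ad C) ≤ traceMulForm.orthogonal V := by
  rintro _ ⟨A, hA, rfl⟩ B hB
  rw [traceMulForm_apply, trace_mul_comm, trace_ad_mul, hC A hA B hB]

lemma exists_linearIndependent_mulVec {C : Matrix ι ι K} (hC : C ∉ Set.range (scalar ι)) :
    ∃ v, LinearIndependent K ![v, C *ᵥ v] := by
  by_contra! h
  obtain ⟨a, ha⟩ := (toLin' C).exists_eq_smul_id_of_forall_notLinearIndependent h
  refine hC ⟨a, toLin'.injective ?_⟩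
  rw [ha, scalar_apply, ← smul_one_eq_diagonal, map_smul, toLin'_one]
  rfl

lemma exists_linearIndependent_vecMul {C : Matrix ι ι K} (hC : C ∉ Set.range (scalar ι)) :
    ∃ g, LinearIndependent K ![g, g ᵥ* C] := by
  have hCt : Cᵀ ∉ Set.range (scalar ι) := by
    rintro ⟨a, ha⟩
    exact hC ⟨a, by rw [← transpose_transpose C, ← ha, scalar_apply, diagonal_transpose]⟩
  simpa only [mulVec_transpose] using exists_linearIndependent_mulVec hCt

lemma exists_dotProduct_eq_zero_and_eq_one {u w : ι → K} (h : LinearIndependent K ![u, w]) :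
    ∃ z, z ⬝ᵥ u = 0 ∧ z ⬝ᵥ w = 1 := by
  obtain ⟨f, hfu, hfw⟩ := Dual.exists_apply_eq_zero_and_eq_one h
  refine ⟨(dotProductEquiv K ι).symm f, ?_, ?_⟩
  · rw [← dotProductEquiv_apply_apply, LinearEquiv.apply_symm_apply, hfu]
  · rw [← dotProductEquiv_apply_apply, LinearEquiv.apply_symm_apply, hfw]

lemma ad_vecMulVec_mulVec (C : Matrix ι ι K) (a b v : ι → K) :
    ad C (vecMulVec a b) *ᵥ v = (b ⬝ᵥ v) • (C *ᵥ a) - (b ⬝ᵥ C *ᵥ v) • a := by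
  rw [ad_apply, sub_mulVec, mul_vecMulVec, ← mulVec_mulVec, vecMulVec_mulVec, vecMulVec_mulVec]
  simp

lemma vecMul_ad_vecMulVec (C : Matrix ι ι K) (a b w : ι → K) :
    w ᵥ* ad C (vecMulVec a b) = (w ⬝ᵥ C *ᵥ a) • b - (w ⬝ᵥ a) • (b ᵥ* C) := by
  rw [ad_apply, vecMul_sub, vecMulVec_mul, ← vecMul_vecMul, vecMul_vecMulVec, vecMul_vecMulVec,
    dotProduct_mulVec]

theorem two_mul_card_le_finrank_range_ad_add_two {C : Matrix ι ι K}
    (hC : C ∉ Set.range (scalar ι)) :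
    2 * Fintype.card ι ≤ finrank K (range (ad C)) + 2 := by
  obtain ⟨v, hv⟩ := exists_linearIndependent_mulVec hC
  obtain ⟨g, hg⟩ := exists_linearIndependent_vecMul hC
  obtain ⟨χ, hχ, hχC⟩ := exists_dotProduct_eq_zero_and_eq_one hv
  obtain ⟨z, hz, hzC⟩ := exists_dotProduct_eq_zero_and_eq_one hg
  rw [dotProduct_comm] at hz
  rw [dotProduct_comm, ← dotProduct_mulVec] at hzC
  let l : (ι → K) →ₗ[K] K × K :=
    ((dotProductBilin K K).flip v).prod ((dotProductBilin K K).flip (C *ᵥ v))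
  have hl : Fintype.card ι ≤ finrank K (ker l) + 2 := by
    have := finrank_range_add_finrank_ker l
    have := (range l).finrank_le
    simp only [finrank_fintype_fun_eq_card, finrank_prod, finrank_self] at *
    omega
  let Θ : (ι → K) × ker l →ₗ[K] Matrix ι ι K :=
    ad C ∘ₗ ((vecMulVecBilin K K).flip χ).coprod (vecMulVecBilin K K z ∘ₗ (ker l).subtype)
  have hΘ : Function.Injective Θ := by
    rw [← ker_eq_bot, ker_eq_bot']
    rintro ⟨t, u, hu⟩ h
    obtain ⟨huv, huCv⟩ : u ⬝ᵥ v = 0 ∧ u ⬝ᵥ C *ᵥ v = 0 := by simpa [l] using hu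
    simp only [coe_comp, Function.comp_apply, coprod_apply, flip_apply, vecMulVecBilin_apply_apply,
      Submodule.coe_subtype, map_add, Θ] at h
    have ht : t = 0 := by
      simpa [add_mulVec, ad_vecMulVec_mulVec, hχ, hχC, huv, huCv] using congr_arg (· *ᵥ v) h
    subst ht
    have hu0 : u = 0 := by
      simpa [vecMul_add, vecMul_ad_vecMulVec, hz, hzC] using congr_arg (g ᵥ* ·) h
    simp [hu0]
  calc 2 * Fintype.card ι ≤ finrank K ((ι → K) × ker l) + 2 := by
        rw [finrank_prod, finrank_fintype_fun_eq_card]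
        omega
    _ = finrank K (range Θ) + 2 := by rw [finrank_range_of_inj hΘ]
    _ ≤ finrank K (range (ad C)) + 2 := by
        gcongr
        exact Submodule.finrank_mono (range_comp_le_range _ _)

theorem mem_range_scalar_of_trace_mul_commutator_eq_zero {V : Submodule K (Matrix ι ι K)}
    (hV : Fintype.card ι ^ 2 - finrank K V < Fintype.card ι - 1) {C : Matrix ι ι K}
    (hC : ∀ A ∈ V, ∀ B ∈ V, (C * (A * B - B * A)).trace = 0) :
    C ∈ Set.range (scalar ι) := by
  by_contra hC'
  have hrange := two_mul_card_le_finrank_range_ad_add_two hC'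
  have hrank := finrank_range_add_finrank_ker (ad C)
  have hmap := V.finrank_le_finrank_map_add_finrank_ker (ad C)
  have horth := Submodule.finrank_mono (map_ad_le_traceMulForm_orthogonal hC)
  rw [BilinForm.finrank_orthogonal traceMulForm_nondegenerate] at horth
  have hVle := V.finrank_le
  simp only [finrank_matrix, finrank_self, mul_one] at hrank horth hVle
  rw [sq] at hV
  generalize Fintype.card ι * Fintype.card ι = N at *
  omega

end Matrix

theorem span_commutators_eq_sl_general (K : Type*) [Field K] (n : ℕ)
    (V : Submodule K (Matrix (Fin n) (Fin n) K))
    (hV : n ^ 2 - Module.finrank K V < n - 1) :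
    Submodule.span K {M : Matrix (Fin n) (Fin n) K | ∃ A ∈ V, ∃ B ∈ V, M = A * B - B * A}
      = LinearMap.ker (Matrix.traceLinearMap (Fin n) K K) := by
  set W := Submodule.span K {M : Matrix (Fin n) (Fin n) K | ∃ A ∈ V, ∃ B ∈ V, M = A * B - B * A}
  refine le_antisymm ?_ ?_
  · rw [Submodule.span_le]
    rintro _ ⟨A, -, B, -, rfl⟩
    simp [trace_sub, Matrix.trace_mul_comm A B]
  · have hW : traceMulForm.orthogonal W ≤ K ∙ 1 := by
      intro C hC
      have hC' : ∀ A ∈ V, ∀ B ∈ V, (C * (A * B - B * A)).trace = 0 := fun A hA B hB => by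
        rw [Matrix.trace_mul_comm]
        exact hC _ (Submodule.subset_span ⟨A, hA, B, hB, rfl⟩)
      obtain ⟨c, rfl⟩ := mem_range_scalar_of_trace_mul_commutator_eq_zero (by simpa using hV) hC'
      exact Submodule.mem_span_singleton.mpr ⟨c, by simp [scalar_apply, smul_one_eq_diagonal]⟩
    calc ker (traceLinearMap (Fin n) K K)
        = traceMulForm.orthogonal (K ∙ 1) := traceMulForm_orthogonal_span_one.symm
      _ ≤ traceMulForm.orthogonal (traceMulForm.orthogonal W) := BilinForm.orthogonal_le hW
      _ = W := BilinForm.orthogonal_orthogonal traceMulForm_nondegenerate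
          traceMulForm_isSymm.isRefl W

theorem span_commutators_eq_sl (K : Type*) [Field K] (n : ℕ) (hn : 0 < n)
    (V : Submodule K (Matrix (Fin n) (Fin n) K))
    (hV : n ^ 2 - Module.finrank K V < n - 1) :
    Submodule.span K {M : Matrix (Fin n) (Fin n) K | ∃ A ∈ V, ∃ B ∈ V, M = A * B - B * A}
      = LinearMap.ker (Matrix.traceLinearMap (Fin n) K K) :=
  span_commutators_eq_sl_general K n V hV
end

section
/- Let K be a field, n a positive integer, and let A ∈ M_n(K) be a matrix that is not a scalar multiple of the identity. Then the codimension of the centralizer of A in M_n(K) (equivalently, the rank of the linear map ad_A : M ↦ AM - MA) is at least 2n - 2. -/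
/-!
Choose `v` with `v, f v` independent and a covector `w` with `w, w ∘ f` independent. For `g`
commuting with `f`, the pair `(g v, w ∘ g)` satisfies the two independent linear relations
`w (g v) = (w ∘ g) v` and `(w ∘ f) (g v) = (w ∘ g) (f v)`, so it ranges over a space of dimension
`2n - 2`. If both components vanish, `g` kills `v, f v` and takes values in `ker w ∩ ker (w ∘ f)`,
which leaves at most `(n - 2)²` dimensions. Hence the centralizer has dimension at most
`(n - 2)² + 2n - 2 = n² - 2n + 2`.
-/

open Module Submodule

namespace LinearMap

theorem mem_ker_mulLeft_sub_mulRight {R A : Type*} [CommSemiring R] [Ring A] [Algebra R A]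
    (a x : A) : x ∈ ker (mulLeft R a - mulRight R a) ↔ Commute a x := by
  rw [mem_ker, sub_apply, mulLeft_apply, mulRight_apply, sub_eq_zero, Commute, SemiconjBy]

theorem exists_linearIndependent_pair_of_ne_smul_one {R V : Type*} [CommRing R] [IsDomain R]
    [AddCommGroup V] [Module R V] [Free R V] {f : V →ₗ[R] V} (hf : ∀ c : R, f ≠ c • 1) :
    ∃ v, LinearIndependent R ![v, f v] := by
  by_contra! h
  obtain ⟨c, hc⟩ := exists_eq_smul_id_of_forall_notLinearIndependent h
  exact hf c hc

theorem dualMap_ne_smul_one {R V : Type*} [CommRing R] [AddCommGroup V] [Module R V]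
    [IsReflexive R V] {f : V →ₗ[R] V} (hf : ∀ c : R, f ≠ c • 1) (c : R) :
    f.dualMap ≠ c • 1 := by
  intro h
  have hc : (c • 1 : V →ₗ[R] V).dualMap = c • 1 := by ext; simp
  apply hf c
  rw [← dualMap_dualMap_eq_iff, h, ← hc]

end LinearMap

theorem AlgEquiv.finrank_ker_mulLeft_sub_mulRight {K R S : Type*} [CommRing K] [Ring R] [Ring S]
    [Algebra K R] [Algebra K S] (e : R ≃ₐ[K] S) (a : R) :
    finrank K (LinearMap.ker (LinearMap.mulLeft K a - LinearMap.mulRight K a)) =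
      finrank K (LinearMap.ker (LinearMap.mulLeft K (e a) - LinearMap.mulRight K (e a))) := by
  have h : (LinearMap.ker (LinearMap.mulLeft K (e a) - LinearMap.mulRight K (e a))).comap
      e.toLinearEquiv.toLinearMap =
        LinearMap.ker (LinearMap.mulLeft K a - LinearMap.mulRight K a) := by
    ext x
    simp only [mem_comap, LinearMap.mem_ker_mulLeft_sub_mulRight, LinearEquiv.coe_coe,
      AlgEquiv.toLinearEquiv_apply, Commute, SemiconjBy, ← map_mul, e.injective.eq_iff]
  rw [← h]
  exact (e.toLinearEquiv.ofSubmodule' _).finrank_eq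

theorem Submodule.finrank_inf_ker_add_finrank_map {K E F : Type*} [DivisionRing K]
    [AddCommGroup E] [Module K E] [AddCommGroup F] [Module K F] [FiniteDimensional K E]
    (p : Submodule K E) (φ : E →ₗ[K] F) :
    finrank K ↥(p ⊓ LinearMap.ker φ) + finrank K (p.map φ) = finrank K p := by
  rw [← LinearMap.range_domRestrict, ← (φ.domRestrict p).finrank_range_add_finrank_ker, add_comm,
    LinearMap.ker_domRestrict, ← Submodule.map_comap_subtype, Submodule.finrank_map_subtype_eq]

theorem Subspace.finrank_dualCoannihilator_span_range_add_card {K V ι : Type*} [Field K]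
    [AddCommGroup V] [Module K V] [FiniteDimensional K V] [Fintype ι] {ℓ : ι → Dual K V}
    (hℓ : LinearIndependent K ℓ) :
    finrank K (span K (Set.range ℓ)).dualCoannihilator + Fintype.card ι = finrank K V := by
  rw [← finrank_add_finrank_dualCoannihilator_eq (span K (Set.range ℓ)), finrank_span_eq_card hℓ,
    add_comm]

theorem Submodule.mem_dualCoannihilator_span_range {R M ι : Type*} [CommSemiring R]
    [AddCommMonoid M] [Module R M] {ℓ : ι → Dual R M} {x : M} :
    x ∈ (span R (Set.range ℓ)).dualCoannihilator ↔ ∀ i, ℓ i x = 0 := by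
  rw [← SetLike.mem_coe, coe_dualCoannihilator_span]
  simp

theorem finrank_le_of_forall_le_ker_of_range_le {K V W : Type*} [Field K]
    [AddCommGroup V] [Module K V] [FiniteDimensional K V]
    [AddCommGroup W] [Module K W] [FiniteDimensional K W]
    {P : Submodule K V} {Y : Submodule K W} {S : Submodule K (V →ₗ[K] W)}
    (hS : ∀ g ∈ S, P ≤ LinearMap.ker g ∧ LinearMap.range g ≤ Y) :
    finrank K S ≤ finrank K (V ⧸ P) * finrank K Y := by
  let Ψ : (V ⧸ P →ₗ[K] Y) →ₗ[K] V →ₗ[K] W :=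
    LinearMap.lcomp K W P.mkQ ∘ₗ LinearMap.llcomp K (V ⧸ P) Y W Y.subtype
  have hSΨ : S ≤ LinearMap.range Ψ := fun g hg ↦
    ⟨LinearMap.codRestrict Y (P.liftQ g (hS g hg).1) fun x ↦ by
      obtain ⟨x, rfl⟩ := P.mkQ_surjective x
      exact (hS g hg).2 (LinearMap.mem_range_self g x), by ext; rfl⟩
  calc finrank K S ≤ finrank K (LinearMap.range Ψ) := Submodule.finrank_mono hSΨ
    _ ≤ finrank K (V ⧸ P →ₗ[K] Y) := LinearMap.finrank_range_le Ψ
    _ = finrank K (V ⧸ P) * finrank K Y := Module.finrank_linearMap K K _ _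

namespace Module.End

open LinearMap

variable {K V : Type*} [Field K] [AddCommGroup V] [Module K V]

def commutationRelations (f : End K V) (v : V) (w : Dual K V) : Fin 2 → Dual K (V × Dual K V) :=
  ![w ∘ₗ fst K V _ - Dual.eval K V v ∘ₗ snd K V _,
    f.dualMap w ∘ₗ fst K V _ - Dual.eval K V (f v) ∘ₗ snd K V _]

theorem linearIndependent_commutationRelations {f : End K V} (v : V) {w : Dual K V}
    (hw : LinearIndependent K ![w, f.dualMap w]) :
    LinearIndependent K (commutationRelations f v w) := by
  have h : (inl K V (Dual K V)).dualMap ∘ commutationRelations f v w = ![w, f.dualMap w] := by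
    ext i x
    fin_cases i <;> simp [commutationRelations]
  exact .of_comp (inl K V (Dual K V)).dualMap (h ▸ hw)

theorem commutationRelations_apply_eq_zero {f g : End K V} (hfg : Commute f g) (v : V)
    (w : Dual K V) (i : Fin 2) : commutationRelations f v w i (g v, w ∘ₗ g) = 0 := by
  fin_cases i <;> simp [commutationRelations, ← mul_apply, hfg.eq]

theorem span_le_ker_and_range_le_of_commute {f g : End K V} (hfg : Commute f g) {v : V}
    {w : Dual K V} (hgv : g v = 0) (hwg : w ∘ₗ g = 0) :
    span K (Set.range ![v, f v]) ≤ ker g ∧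
      range g ≤ (span K (Set.range ![w, f.dualMap w])).dualCoannihilator := by
  have hcomm (x : V) : f (g x) = g (f x) := LinearMap.congr_fun hfg.eq x
  have hwgx (x : V) : w (g x) = 0 := LinearMap.congr_fun hwg x
  refine ⟨span_le.2 (Set.range_subset_iff.2 fun i ↦ ?_), ?_⟩
  · fin_cases i <;> simp [← hcomm, hgv]
  · rintro _ ⟨x, rfl⟩
    rw [mem_dualCoannihilator_span_range, Fin.forall_fin_two]
    simp [hcomm, hwgx]

theorem finrank_ker_mulLeft_sub_mulRight_add_two_mul_le [FiniteDimensional K V] {f : End K V}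
    (hf : ∀ c : K, f ≠ c • 1) :
    finrank K (ker (mulLeft K f - mulRight K f)) + 2 * finrank K V ≤ finrank K V ^ 2 + 2 := by
  obtain ⟨v, hv⟩ := exists_linearIndependent_pair_of_ne_smul_one hf
  obtain ⟨w, hw⟩ := exists_linearIndependent_pair_of_ne_smul_one (dualMap_ne_smul_one hf)
  set C := ker (mulLeft K f - mulRight K f)
  set Φ : End K V →ₗ[K] V × Dual K V := (applyₗ v).prod (llcomp K V V K w)
  set P := span K (Set.range ![v, f v])
  set Y := (span K (Set.range ![w, f.dualMap w])).dualCoannihilator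
  set Z := (span K (Set.range (commutationRelations f v w))).dualCoannihilator
  have hker : ∀ g ∈ C ⊓ ker Φ, P ≤ ker g ∧ range g ≤ Y := by
    rintro g ⟨hgC, hgΦ⟩
    obtain ⟨hgv, hwg⟩ := Prod.ext_iff.1 (mem_ker.1 hgΦ)
    exact span_le_ker_and_range_le_of_commute ((mem_ker_mulLeft_sub_mulRight f g).1 hgC) hgv hwg
  have hmap : C.map Φ ≤ Z := by
    rintro _ ⟨g, hgC, rfl⟩
    exact mem_dualCoannihilator_span_range.2 <|
      commutationRelations_apply_eq_zero ((mem_ker_mulLeft_sub_mulRight f g).1 hgC) v w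
  have hP : finrank K (V ⧸ P) + 2 = finrank K V := by
    have h2 : finrank K P = 2 := finrank_span_eq_card hv
    rw [← h2, Submodule.finrank_quotient_add_finrank]
  have hY : finrank K Y + Fintype.card (Fin 2) = finrank K V :=
    Subspace.finrank_dualCoannihilator_span_range_add_card hw
  have hZ : finrank K Z + Fintype.card (Fin 2) = finrank K (V × Dual K V) :=
    Subspace.finrank_dualCoannihilator_span_range_add_card
      (linearIndependent_commutationRelations v hw)
  rw [Fintype.card_fin] at hY hZ
  rw [finrank_prod, Subspace.dual_finrank_eq] at hZ
  rw [← C.finrank_inf_ker_add_finrank_map Φ]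
  have hT := finrank_le_of_forall_le_ker_of_range_le hker
  have hCZ := Submodule.finrank_mono hmap
  nlinarith

end Module.End

theorem centralizer_codim_ge_general (K : Type*) [Field K] (n : ℕ)
    (A : Matrix (Fin n) (Fin n) K) (hA : ∀ c : K, A ≠ c • (1 : Matrix (Fin n) (Fin n) K)) :
    2 * n - 2 ≤ n ^ 2 - Module.finrank K
      (LinearMap.ker (LinearMap.mulLeft K A - LinearMap.mulRight K A)) := by
  have hf : ∀ c : K, Matrix.toLinAlgEquiv' A ≠ c • 1 := fun c h ↦
    hA c (Matrix.toLinAlgEquiv'.injective (by rw [h, map_smul, map_one]))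
  have := Module.End.finrank_ker_mulLeft_sub_mulRight_add_two_mul_le hf
  rw [Module.finrank_fin_fun, ← AlgEquiv.finrank_ker_mulLeft_sub_mulRight] at this
  omega

theorem centralizer_codim_ge (K : Type*) [Field K] (n : ℕ) (hn : 0 < n)
    (A : Matrix (Fin n) (Fin n) K) (hA : ∀ c : K, A ≠ c • (1 : Matrix (Fin n) (Fin n) K)) :
    2 * n - 2 ≤ n ^ 2 - Module.finrank K
      (LinearMap.ker (LinearMap.mulLeft K A - LinearMap.mulRight K A)) :=
  centralizer_codim_ge_general K n A hA
end

section
/- Let K be a field, n ≥ 1, and let V, W be linear subspaces of M_n(K) with codim V + codim W < n. Then M_n(K) is spanned as a K-vector space by the set of products {BC : B ∈ V, C ∈ W}. -/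
/-!
Suppose the products `B * C` (`B ∈ V`, `C ∈ W`) span a proper subspace, so some functional
`f ≠ 0` kills them all. Then `C ↦ (B ↦ f (B * C))` maps `W` into the annihilator of `V`, whose
dimension is `codim V`. Writing `f = trace (· * A)` with `A ≠ 0`, its kernel consists of the `C`
with `C * A = 0`, hence is contained in `{C | C *ᵥ v = 0}` for a nonzero vector `v` in the range
of `A`, a subspace of codimension `n`. Rank–nullity on `W` then gives `n ≤ codim V + codim W`.
-/

open Module

theorem LinearMap.finrank_add_finrank_le_of_apply_eq_zero {K M N : Type*} [Field K]
    [AddCommGroup M] [Module K M] [FiniteDimensional K M]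
    [AddCommGroup N] [Module K N] [FiniteDimensional K N]
    (β : M →ₗ[K] N →ₗ[K] K) {V : Submodule K M} {W : Submodule K N}
    (h : ∀ x ∈ V, ∀ y ∈ W, β x y = 0) :
    finrank K V + finrank K W ≤ finrank K M + finrank K (ker β.flip) := by
  set Φ := β.flip.domRestrict W
  have hrange : finrank K (range Φ) ≤ finrank K V.dualAnnihilator := by
    refine Submodule.finrank_mono ?_
    rintro _ ⟨⟨y, hy⟩, rfl⟩
    exact (Submodule.mem_dualAnnihilator _).2 fun x hx => h x hx y hy
  have hker : finrank K (ker Φ) ≤ finrank K (ker β.flip) := by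
    rw [ker_domRestrict]
    exact finrank_le_finrank_of_injective
      (f := W.subtype.restrict fun _ hy => hy) ((injective_restrict_iff _).2 (by simp))
  have hV := Subspace.finrank_add_finrank_dualAnnihilator_eq V
  have hW := finrank_range_add_finrank_ker Φ
  omega

namespace Matrix

variable {K m n : Type*} [Fintype m] [Fintype n]

theorem exists_eq_trace_mul [CommSemiring K] [DecidableEq n] (f : Dual K (Matrix n n K)) :
    ∃ A : Matrix n n K, ∀ M, f M = trace (M * A) := by
  refine ⟨of fun i j => f (single j i 1), fun M => ?_⟩
  induction M using Matrix.induction_on' with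
  | h_zero => simp
  | h_add M N hM hN => rw [map_add, hM, hN, add_mul, trace_add]
  | h_std_basis i j x => rw [trace_single_mul, of_apply, ← map_smul, smul_single, smul_eq_mul, mul_one]

variable [Field K]

theorem finrank_ker_mulVec_add_card {v : n → K} (hv : v ≠ 0) :
    finrank K (LinearMap.ker ((mulVecBilin K K).flip v : Matrix m n K →ₗ[K] m → K)) +
      Fintype.card m = Fintype.card m * Fintype.card n := by
  classical
  obtain ⟨i, hi⟩ := Function.ne_iff.1 hv
  have hsurj : Function.Surjective ((mulVecBilin K K).flip v : Matrix m n K →ₗ[K] m → K) :=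
    fun u => ⟨vecMulVec u (Pi.single i (v i)⁻¹), by simp [vecMulVec_mulVec, inv_mul_cancel₀ hi]⟩
  have hrank := LinearMap.finrank_range_add_finrank_ker
    ((mulVecBilin K K).flip v : Matrix m n K →ₗ[K] m → K)
  rwa [LinearMap.range_eq_top.2 hsurj, finrank_top, finrank_matrix, finrank_fintype_fun_eq_card,
    finrank_self, mul_one, add_comm] at hrank

theorem finrank_add_card_le_of_forall_apply_mul_eq_zero {f : Dual K (Matrix n n K)} (hf : f ≠ 0)
    {W : Submodule K (Matrix n n K)} (hW : ∀ C ∈ W, ∀ B, f (B * C) = 0) :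
    finrank K W + Fintype.card n ≤ Fintype.card n * Fintype.card n := by
  classical
  obtain ⟨A, hA⟩ := exists_eq_trace_mul f
  obtain ⟨w, hw⟩ : ∃ w, A *ᵥ w ≠ 0 := by
    by_contra! h
    have hA0 : A = 0 := ext_of_mulVec_single fun i => by rw [h, zero_mulVec]
    exact hf (LinearMap.ext fun M => by simp [hA, hA0])
  have hWker : W ≤ LinearMap.ker ((mulVecBilin K K).flip (A *ᵥ w)) := fun C hC => by
    have hCA : C * A = 0 := ext_iff_trace_mul_left.2 fun B => by
      rw [← Matrix.mul_assoc, ← hA, hW C hC, mul_zero, trace_zero]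
    simp [mulVec_mulVec, hCA]
  rw [← finrank_ker_mulVec_add_card hw]
  exact Nat.add_le_add_right (Submodule.finrank_mono hWker) _

end Matrix

theorem span_products_two_subspaces_general (K : Type*) [Field K] (n : ℕ)
    (V W : Submodule K (Matrix (Fin n) (Fin n) K))
    (h : (n ^ 2 - Module.finrank K V) + (n ^ 2 - Module.finrank K W) < n) :
    Submodule.span K {M : Matrix (Fin n) (Fin n) K | ∃ B ∈ V, ∃ C ∈ W, M = B * C} = ⊤ := by
  by_contra hspan
  obtain ⟨f, hf, hspan_le⟩ :=
    (Submodule.span K _).exists_le_ker_of_lt_top (lt_top_iff_ne_top.2 hspan)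
  set β := (LinearMap.mul K (Matrix (Fin n) (Fin n) K)).compr₂ f
  have hVW : ∀ B ∈ V, ∀ C ∈ W, β B C = 0 := fun B hB C hC =>
    hspan_le (Submodule.subset_span ⟨B, hB, C, hC, rfl⟩)
  have hdim := LinearMap.finrank_add_finrank_le_of_apply_eq_zero β hVW
  have hker := Matrix.finrank_add_card_le_of_forall_apply_mul_eq_zero hf
    (W := LinearMap.ker β.flip) fun C hC B => LinearMap.congr_fun hC B
  have hV := Submodule.finrank_le V
  have hW := Submodule.finrank_le W
  simp only [finrank_matrix, finrank_self, Fintype.card_fin, mul_one] at hdim hker hV hW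
  rw [sq] at h
  omega

theorem span_products_two_subspaces (K : Type*) [Field K] (n : ℕ) (hn : 0 < n)
    (V W : Submodule K (Matrix (Fin n) (Fin n) K))
    (h : (n ^ 2 - Module.finrank K V) + (n ^ 2 - Module.finrank K W) < n) :
    Submodule.span K {M : Matrix (Fin n) (Fin n) K | ∃ B ∈ V, ∃ C ∈ W, M = B * C} = ⊤ :=
  span_products_two_subspaces_general K n V W h
end

section
/- Let K be a field and n ≥ 1. Let V, W be linear subspaces of M_n(K) with codim V + codim W = n, and suppose the set {BC : B ∈ V, C ∈ W} does not span M_n(K). Then there exist an integer p with 0 ≤ p ≤ n and invertible matrices P, Q, R ∈ GL_n(K) such that V = P·V_p·Q and W = Q⁻¹·W_p·R, where V_p consists of the matrices of the form [[0, L],[M, N]] with 0 a 1×p zero block, and W_p consists of the matrices of the form [[C, A],[0, B]] with 0 an (n-p)×1 zero block. -/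
open Module Submodule LinearMap Matrix

section Aux

variable {K : Type*} [Field K] {n : ℕ}

/-- The "orthogonal complement" of a subspace of `Fin n → K` w.r.t. the dot product. -/
def dotPerpAux (U : Submodule K (Fin n → K)) : Submodule K (Fin n → K) where
  carrier := {v | ∀ u ∈ U, dotProduct u v = 0}
  add_mem' := by
    intro a b ha hb u hu
    simp [dotProduct_add, ha u hu, hb u hu]
  zero_mem' := by
    intro u hu
    simp
  smul_mem' := by
    intro c z hz u hu
    simp [dotProduct_smul, hz u hu]

lemma mem_dotPerpAux {U : Submodule K (Fin n → K)} {v : Fin n → K} :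
    v ∈ dotPerpAux U ↔ ∀ u ∈ U, dotProduct u v = 0 := Iff.rfl

lemma basisFun_toDual_apply (v w : Fin n → K) :
    (Pi.basisFun K (Fin n)).toDual v w = dotProduct v w := by
  have hw : w = ∑ j, w j • (Pi.basisFun K (Fin n)) j := by
    simp [Pi.basisFun_apply]
    exact (pi_eq_sum_univ w).trans (by
      refine Finset.sum_congr rfl fun j _ => ?_
      ext k
      simp [Pi.single_apply, eq_comm])
  conv_lhs => rw [hw]
  rw [map_sum]
  simp only [_root_.map_smul]
  rw [dotProduct_comm, dotProduct, ]
  refine Finset.sum_congr rfl fun j _ => ?_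
  rw [Basis.toDual_eq_repr, Pi.basisFun_repr]
  simp [mul_comm]

lemma finrank_dotPerpAux (U : Submodule K (Fin n → K)) :
    finrank K U + finrank K (dotPerpAux U) = n := by
  classical
  have hperp : dotPerpAux U =
      Submodule.comap ((Pi.basisFun K (Fin n)).toDualEquiv :
        (Fin n → K) →ₗ[K] Module.Dual K (Fin n → K)) U.dualAnnihilator := by
    ext v
    simp only [mem_dotPerpAux, Submodule.mem_comap, Submodule.mem_dualAnnihilator]
    constructor
    · intro h w hw
      show (Pi.basisFun K (Fin n)).toDual v w = 0
      rw [basisFun_toDual_apply, dotProduct_comm]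
      exact h w hw
    · intro h u hu
      have h2 := h u hu
      have h3 : (Pi.basisFun K (Fin n)).toDual v u = 0 := h2
      rw [basisFun_toDual_apply, dotProduct_comm] at h3
      exact h3
  have h1 : finrank K (dotPerpAux U) = finrank K U.dualAnnihilator := by
    rw [hperp, Submodule.comap_equiv_eq_map_symm]
    exact LinearEquiv.finrank_map_eq _ _
  have h2 : finrank K U.dualAnnihilator = finrank K ((Fin n → K) ⧸ U) :=
    (LinearEquiv.finrank_eq (Subspace.quotEquivAnnihilator U)).symm
  rw [h1, h2, add_comm, Submodule.finrank_quotient_add_finrank, Module.finrank_fin_fun]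

end Aux

open Module Submodule LinearMap Matrix

section Aux2

variable {K : Type*} [Field K] {n : ℕ}

/-- The entrywise pairing of matrices, as a map into the dual. -/
def pairDualAux (K : Type*) [Field K] (n : ℕ) :
    Matrix (Fin n) (Fin n) K →ₗ[K] Module.Dual K (Matrix (Fin n) (Fin n) K) where
  toFun D :=
    { toFun := fun C => ∑ i, ∑ j, D i j * C i j
      map_add' := by
        intro C C'
        simp [Matrix.add_apply, mul_add, Finset.sum_add_distrib]
      map_smul' := by
        intro c C
        simp [Matrix.smul_apply, Finset.mul_sum, smul_eq_mul]
        congr 1; ext i; congr 1; ext j; ring }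
  map_add' := by
    intro D D'
    ext C
    simp [Matrix.add_apply, add_mul, Finset.sum_add_distrib]
  map_smul' := by
    intro c D
    ext C
    simp [Matrix.smul_apply, Finset.mul_sum, smul_eq_mul]
    congr 1; ext i; congr 1; ext j; ring

lemma pairDualAux_apply (D C : Matrix (Fin n) (Fin n) K) :
    pairDualAux K n D C = ∑ i, ∑ j, D i j * C i j := rfl

lemma pairDualAux_std (D : Matrix (Fin n) (Fin n) K) (i j : Fin n) :
    pairDualAux K n D (Matrix.single i j 1) = D i j := by
  classical
  rw [pairDualAux_apply]
  rw [Finset.sum_eq_single i]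
  · rw [Finset.sum_eq_single j]
    · simp [Matrix.single]
    · intro b _ hb; simp [Matrix.single, hb.symm]
    · simp
  · intro a _ ha; apply Finset.sum_eq_zero; intro b _; simp [Matrix.single, ha.symm]
  · simp

lemma pairDualAux_injective : Function.Injective (pairDualAux K n) := by
  intro D D' h
  ext i j
  have := congrArg (fun φ => φ (Matrix.single i j 1)) h
  simpa [pairDualAux_std] using this

lemma pairDualAux_surjective : Function.Surjective (pairDualAux K n) := by
  classical
  intro φ
  refine ⟨Matrix.of fun i j => φ (Matrix.single i j 1), ?_⟩
  ext C
  rw [pairDualAux_apply]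
  conv_rhs => rw [Matrix.matrix_eq_sum_single C]
  rw [map_sum]
  refine Finset.sum_congr rfl fun i _ => ?_
  rw [map_sum]
  refine Finset.sum_congr rfl fun j _ => ?_
  have : Matrix.single i j (C i j) = C i j • Matrix.single i j 1 := by
    rw [Matrix.smul_single]; simp
  rw [this, _root_.map_smul]
  simp [Matrix.of_apply, smul_eq_mul, mul_comm]

lemma pairDualAux_mul (A B C : Matrix (Fin n) (Fin n) K) :
    pairDualAux K n A (B * C) = pairDualAux K n (Bᵀ * A) C := by
  rw [pairDualAux_apply, pairDualAux_apply]
  simp only [Matrix.mul_apply, Matrix.transpose_apply, Finset.mul_sum, Finset.sum_mul]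
  have key : ∀ (f : Fin n → Fin n → Fin n → K),
      ∑ i, ∑ j, ∑ k, f i j k = ∑ k, ∑ j, ∑ i, f i j k := by
    intro f
    calc ∑ i, ∑ j, ∑ k, f i j k
        = ∑ j, ∑ i, ∑ k, f i j k := Finset.sum_comm
      _ = ∑ j, ∑ k, ∑ i, f i j k := Finset.sum_congr rfl fun j _ => Finset.sum_comm
      _ = ∑ k, ∑ j, ∑ i, f i j k := Finset.sum_comm
  rw [key fun i j k => A i j * (B i k * C k j)]
  refine Finset.sum_congr rfl fun k _ => ?_
  refine Finset.sum_congr rfl fun j _ => ?_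
  refine Finset.sum_congr rfl fun i _ => ?_
  ring

/-- Left "transpose-multiplication" map `B ↦ Bᵀ * A`. -/
def tmatAux (A : Matrix (Fin n) (Fin n) K) :
    Matrix (Fin n) (Fin n) K →ₗ[K] Matrix (Fin n) (Fin n) K where
  toFun B := Bᵀ * A
  map_add' := by intro B B'; simp [Matrix.transpose_add, Matrix.add_mul]
  map_smul' := by intro c B; simp [Matrix.transpose_smul, Matrix.smul_mul]

/-- The kernel of `B ↦ Bᵀ * A` is equivalent to `n` copies of the kernel of `vecMulLinear A`. -/
noncomputable def kerTmatEquiv (A : Matrix (Fin n) (Fin n) K) :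
    LinearMap.ker (tmatAux A) ≃ₗ[K] (Fin n → LinearMap.ker A.vecMulLinear) where
  toFun B i := ⟨fun k => B.1 k i, by
    have h0 : (B.1)ᵀ * A = 0 := B.2
    rw [LinearMap.mem_ker]
    ext j
    have h1 : ∑ k, B.1 k i * A k j = 0 := by
      have := congrFun (congrFun h0 i) j
      simpa [Matrix.mul_apply, Matrix.transpose_apply] using this
    simpa [Matrix.vecMulLinear_apply, Matrix.vecMul, dotProduct] using h1⟩
  map_add' := by intro B B'; ext i k; rfl
  map_smul' := by intro c B; ext i k; rfl
  invFun g := ⟨Matrix.of fun k i => (g i).1 k, by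
    rw [LinearMap.mem_ker]
    ext i j
    have h0 : Matrix.vecMul (g i).1 A = 0 := (g i).2
    have h1 : ∑ k, (g i).1 k * A k j = 0 := by
      have := congrFun h0 j
      simpa [Matrix.vecMul, dotProduct] using this
    show ((Matrix.of fun k i => (g i).1 k)ᵀ * A) i j = (0 : Matrix (Fin n) (Fin n) K) i j
    simpa [Matrix.mul_apply, Matrix.transpose_apply, Matrix.of_apply] using h1⟩
  left_inv := by intro B; ext k i; rfl
  right_inv := by intro g; ext i k; rfl

lemma finrank_ker_tmatAux (A : Matrix (Fin n) (Fin n) K) :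
    finrank K (LinearMap.ker (tmatAux A)) = n * finrank K (LinearMap.ker A.vecMulLinear) := by
  rw [LinearEquiv.finrank_eq (kerTmatEquiv A), Module.finrank_pi_fintype]
  simp [Finset.sum_const, Fintype.card_fin]

lemma vecMulLinear_eq_mulVecLin_transpose (A : Matrix (Fin n) (Fin n) K) :
    A.vecMulLinear = Aᵀ.mulVecLin := by
  ext x
  simp [Matrix.mulVec_transpose]

lemma finrank_ker_vecMulLinear (A : Matrix (Fin n) (Fin n) K) :
    finrank K (LinearMap.ker A.vecMulLinear) + A.rank = n := by
  have h := LinearMap.finrank_range_add_finrank_ker A.vecMulLinear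
  rw [Module.finrank_fin_fun] at h
  have hr : finrank K (LinearMap.range A.vecMulLinear) = A.rank := by
    rw [vecMulLinear_eq_mulVecLin_transpose]
    rw [show Aᵀ.mulVecLin = Aᵀ.mulVecLin from rfl]
    have : finrank K (LinearMap.range Aᵀ.mulVecLin) = Aᵀ.rank := rfl
    rw [this, Matrix.rank_transpose]
  omega

lemma rank_one_decomp (A : Matrix (Fin n) (Fin n) K) (h0 : A ≠ 0) (h1 : A.rank ≤ 1) :
    ∃ x y : Fin n → K, x ≠ 0 ∧ y ≠ 0 ∧ ∀ i j, A i j = x i * y j := by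
  classical
  have hcol : ∀ j, A.mulVecLin (Pi.single j 1) = fun i => A i j := by
    intro j
    ext i
    simp [Matrix.mulVecLin_apply, Matrix.mulVec, dotProduct, Pi.single_apply]
  have hne : A.rank ≠ 0 := by
    intro hz
    apply h0
    have hbot : LinearMap.range A.mulVecLin = ⊥ := by
      rw [← Submodule.finrank_eq_zero]
      exact hz
    ext i j
    have : A.mulVecLin (Pi.single j 1) = 0 := by
      have : A.mulVecLin (Pi.single j 1) ∈ LinearMap.range A.mulVecLin := ⟨_, rfl⟩
      rw [hbot] at this
      simpa using this
    have h2 := congrFun (hcol j) i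
    rw [this] at h2
    exact h2.symm
  have hr1 : A.rank = 1 := by omega
  rw [Matrix.rank] at hr1
  obtain ⟨v, hv0, hv⟩ := finrank_eq_one_iff'.mp hr1
  set x : Fin n → K := v.1 with hxdef
  have hx : x ≠ 0 := by
    intro h
    apply hv0
    exact Subtype.ext h
  have hcolmem : ∀ j, (fun i => A i j) ∈ LinearMap.range A.mulVecLin := by
    intro j
    exact ⟨Pi.single j 1, hcol j⟩
  choose y hy using fun j => hv ⟨fun i => A i j, hcolmem j⟩
  have hAxy : ∀ i j, A i j = x i * y j := by
    intro i j
    have := congrArg (fun (w : LinearMap.range A.mulVecLin) => w.1 i) (hy j)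
    simp only [Submodule.coe_smul, Pi.smul_apply, smul_eq_mul] at this
    rw [← this]
    ring
  refine ⟨x, y, hx, ?_, hAxy⟩
  intro h
  apply h0
  ext i j
  rw [hAxy i j, congrFun h j]
  simp

end Aux2

open Module Submodule LinearMap Matrix

section Aux3

variable {K : Type*} [Field K] {n : ℕ}

lemma exists_adapted_basis (U : Submodule K (Fin n → K)) {d p : ℕ} (hpd : p + d = n)
    (bU : Basis (Fin d) K U) :
    ∃ b : Basis (Fin n) K (Fin n → K),
      (∀ j : Fin d, b ⟨p + (j : ℕ), by omega⟩ = (bU j : Fin n → K)) ∧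
      Submodule.span K (⇑b '' {i : Fin n | p ≤ (i : ℕ)}) = U := by
  classical
  obtain ⟨Uc, hc⟩ := Submodule.exists_isCompl U
  have hU : finrank K U = d := by
    rw [finrank_eq_card_basis bU, Fintype.card_fin]
  have hcd : finrank K U + finrank K Uc = n := by
    rw [Submodule.finrank_add_eq_of_isCompl hc, Module.finrank_fin_fun]
  have hUc : finrank K Uc = p := by omega
  let bC : Basis (Fin p) K Uc := finBasisOfFinrankEq K Uc hUc
  let e : Fin p ⊕ Fin d ≃ Fin n := finSumFinEquiv.trans (finCongr hpd)
  let bfull : Basis (Fin p ⊕ Fin d) K (Fin n → K) :=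
    (bC.prod bU).map (Submodule.prodEquivOfIsCompl Uc U hc.symm)
  let b : Basis (Fin n) K (Fin n → K) := bfull.reindex e
  have hval : ∀ j : Fin d, b ⟨p + (j : ℕ), by omega⟩ = (bU j : Fin n → K) := by
    intro j
    have he : e (Sum.inr j) = ⟨p + (j : ℕ), by omega⟩ := by
      apply Fin.ext
      simp [e, finSumFinEquiv, Fin.natAdd]
    have : b (e (Sum.inr j)) = bfull (Sum.inr j) := by
      rw [Basis.reindex_apply, Equiv.symm_apply_apply]
    rw [← he, this]
    rw [Basis.map_apply, Basis.prod_apply]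
    simp [Submodule.coe_prodEquivOfIsCompl']
  refine ⟨b, hval, ?_⟩
  have himg : ⇑b '' {i : Fin n | p ≤ (i : ℕ)} = Subtype.val '' Set.range ⇑bU := by
    ext v
    constructor
    · rintro ⟨i, hi, rfl⟩
      simp only [Set.mem_setOf_eq] at hi
      have hj : (i : ℕ) - p < d := by omega
      refine ⟨bU ⟨(i : ℕ) - p, hj⟩, ⟨⟨(i : ℕ) - p, hj⟩, rfl⟩, ?_⟩
      rw [← hval ⟨(i : ℕ) - p, hj⟩]
      exact congrArg ⇑b (Fin.ext (by simp; omega))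
    · rintro ⟨u, ⟨j, rfl⟩, rfl⟩
      refine ⟨⟨p + (j : ℕ), by omega⟩, by simp, ?_⟩
      rw [hval j]
  rw [himg]
  have hvv : Subtype.val '' Set.range ⇑bU = ⇑U.subtype '' Set.range ⇑bU := rfl
  rw [hvv, ← Submodule.map_span, Basis.span_eq, Submodule.map_top, Submodule.range_subtype]

lemma exists_basis_head (hn : 0 < n) (x : Fin n → K) (hx : x ≠ 0) :
    ∃ b : Basis (Fin n) K (Fin n → K), b ⟨0, hn⟩ = x := by
  classical
  have hli : LinearIndependent K (fun _ : Fin 1 => x) := by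
    apply linearIndependent_unique_iff.mpr
    exact hx
  let U : Submodule K (Fin n → K) := Submodule.span K (Set.range fun _ : Fin 1 => x)
  let bU : Basis (Fin 1) K U := Basis.span hli
  obtain ⟨b, hb, -⟩ := exists_adapted_basis U (d := 1) (p := n - 1) (by omega) bU
  let swap : Equiv.Perm (Fin n) := Equiv.swap ⟨0, hn⟩ ⟨n - 1, by omega⟩
  refine ⟨b.reindex swap, ?_⟩
  rw [Basis.reindex_apply]
  have : swap.symm ⟨0, hn⟩ = ⟨n - 1, by omega⟩ := by
    simp [swap, Equiv.symm_swap, Equiv.swap_apply_left]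
  rw [this]
  have h1 : b ⟨(n - 1) + (0 : ℕ), by omega⟩ = (bU 0 : Fin n → K) := hb 0
  have h2 : (bU 0 : Fin n → K) = x := congrArg Subtype.val (Basis.span_apply hli 0)
  have h3 : (⟨n - 1, by omega⟩ : Fin n) = ⟨(n - 1) + (0 : ℕ), by omega⟩ := by
    apply Fin.ext; simp
  rw [h3, h1, h2]

lemma isUnit_rowsBasis (b : Basis (Fin n) K (Fin n → K)) :
    IsUnit (Matrix.of (fun i j => b i j) : Matrix (Fin n) (Fin n) K) := by
  classical
  set Q : Matrix (Fin n) (Fin n) K := Matrix.of (fun i j => b i j)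
  have hQt : Qᵀ = (Pi.basisFun K (Fin n)).toMatrix ⇑b := by
    ext i j
    rw [Basis.toMatrix_apply, Pi.basisFun_repr]
    rfl
  have : Invertible ((Pi.basisFun K (Fin n)).toMatrix ⇑b) :=
    (Pi.basisFun K (Fin n)).invertibleToMatrix b
  have hu : IsUnit ((Pi.basisFun K (Fin n)).toMatrix ⇑b) := isUnit_of_invertible _
  rw [Matrix.isUnit_iff_isUnit_det]
  rw [Matrix.isUnit_iff_isUnit_det] at hu
  rw [← hQt, Matrix.det_transpose] at hu
  exact hu

end Aux3

open Module Submodule LinearMap Matrix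

section Aux4

variable {K : Type*} [Field K] {n : ℕ}

/-- Left row multiplication `B ↦ x ᵥ* B` as a linear map. -/
def rowMulAux (x : Fin n → K) : Matrix (Fin n) (Fin n) K →ₗ[K] (Fin n → K) where
  toFun B := Matrix.vecMul x B
  map_add' := by
    intro B B'
    ext j
    simp [Matrix.vecMul, dotProduct, Matrix.add_apply, mul_add, Finset.sum_add_distrib]
  map_smul' := by
    intro c B
    ext j
    simp [Matrix.vecMul, dotProduct, Matrix.smul_apply, Finset.mul_sum, smul_eq_mul]
    congr 1; ext i; ring

/-- Right column multiplication `C ↦ C *ᵥ y` as a linear map. -/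
def colMulAux (y : Fin n → K) : Matrix (Fin n) (Fin n) K →ₗ[K] (Fin n → K) where
  toFun C := Matrix.mulVec C y
  map_add' := by
    intro B B'
    ext i
    simp [Matrix.mulVec, dotProduct, Matrix.add_apply, add_mul, Finset.sum_add_distrib]
  map_smul' := by
    intro c B
    ext i
    simp [Matrix.mulVec, dotProduct, Matrix.smul_apply, Finset.mul_sum, smul_eq_mul]
    congr 1; ext j; ring

lemma rowMulAux_surjective {x : Fin n → K} (hx : x ≠ 0) :
    Function.Surjective (rowMulAux (K := K) (n := n) x) := by
  classical
  obtain ⟨i0, hi0⟩ : ∃ i, x i ≠ 0 := by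
    by_contra h
    push_neg at h
    exact hx (funext h)
  intro v
  refine ⟨Matrix.of fun i j => if i = i0 then (x i0)⁻¹ * v j else 0, ?_⟩
  ext j
  show ∑ i, x i * (if i = i0 then (x i0)⁻¹ * v j else 0) = v j
  rw [Finset.sum_eq_single i0]
  · simp [hi0]
  · intro b _ hb; simp [hb]
  · simp

lemma colMulAux_surjective {y : Fin n → K} (hy : y ≠ 0) :
    Function.Surjective (colMulAux (K := K) (n := n) y) := by
  classical
  obtain ⟨j0, hj0⟩ : ∃ j, y j ≠ 0 := by
    by_contra h
    push_neg at h
    exact hy (funext h)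
  intro v
  refine ⟨Matrix.of fun i j => if j = j0 then (y j0)⁻¹ * v i else 0, ?_⟩
  ext i
  show ∑ j, (if j = j0 then (y j0)⁻¹ * v i else 0) * y j = v i
  rw [Finset.sum_eq_single j0]
  · rw [if_pos rfl]; field_simp
  · intro b _ hb; simp [hb]
  · simp

lemma finrank_ker_domRestrict_le {M M' : Type*} [AddCommGroup M] [Module K M]
    [AddCommGroup M'] [Module K M'] [FiniteDimensional K M]
    (f : M →ₗ[K] M') (p : Submodule K M) :
    finrank K (LinearMap.ker (f.domRestrict p)) ≤ finrank K (LinearMap.ker f) := by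
  let φ : ↥(LinearMap.ker (f.domRestrict p)) →ₗ[K] ↥(LinearMap.ker f) :=
    { toFun := fun z => ⟨(z.1 : M), by
        rw [LinearMap.mem_ker]
        exact LinearMap.mem_ker.mp z.2⟩
      map_add' := fun _ _ => rfl
      map_smul' := fun _ _ => rfl }
  apply LinearMap.finrank_le_finrank_of_injective (f := φ)
  intro z w h
  have h2 : (z.1 : M) = (w.1 : M) :=
    congrArg (fun u : ↥(LinearMap.ker f) => (u : M)) h
  exact Subtype.ext (Subtype.ext h2)

lemma finrank_comap_le {M M' : Type*} [AddCommGroup M] [Module K M]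
    [AddCommGroup M'] [Module K M'] [FiniteDimensional K M] [FiniteDimensional K M']
    (f : M →ₗ[K] M') (q : Submodule K M') :
    finrank K (Submodule.comap f q) ≤ finrank K q + finrank K (LinearMap.ker f) := by
  have h := LinearMap.finrank_range_add_finrank_ker (f.domRestrict (Submodule.comap f q))
  rw [LinearMap.range_domRestrict] at h
  have h1 : finrank K (Submodule.map f (Submodule.comap f q)) ≤ finrank K q :=
    Submodule.finrank_mono (Submodule.map_comap_le f q)
  have h2 := finrank_ker_domRestrict_le f (Submodule.comap f q)
  omega

lemma pnscRowMulApply (M N : Matrix (Fin n) (Fin n) K) (i : Fin n) :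
    (M * N) i = Matrix.vecMul (M i) N := by
  ext j
  simp [Matrix.mul_apply, Matrix.vecMul, dotProduct]

lemma pnscSingleVecMul (M : Matrix (Fin n) (Fin n) K) (i : Fin n) :
    Matrix.vecMul (Pi.single i 1) M = M i := by
  classical
  ext j
  show ∑ k, (Pi.single i (1 : K) : Fin n → K) k * M k j = M i j
  rw [Finset.sum_eq_single i]
  · simp
  · intro b _ hb; simp [Pi.single_apply, hb]
  · simp

lemma pnscMulVecSingle (M : Matrix (Fin n) (Fin n) K) (j : Fin n) :
    Matrix.mulVec M (Pi.single j 1) = fun i => M i j := by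
  classical
  ext i
  show ∑ k, M i k * (Pi.single j (1 : K) : Fin n → K) k = M i j
  rw [Finset.sum_eq_single j]
  · simp
  · intro b _ hb; simp [Pi.single_apply, hb]
  · simp

lemma pnscVecMulSum (z : Fin n → K) (Q : Matrix (Fin n) (Fin n) K) :
    Matrix.vecMul z Q = ∑ i, z i • Q i := by
  ext j
  rw [Finset.sum_apply]
  show ∑ i, z i * Q i j = _
  refine Finset.sum_congr rfl fun i _ => ?_
  simp

lemma pnscColMulApply (M N : Matrix (Fin n) (Fin n) K) (j : Fin n) :
    (fun i => (M * N) i j) = Matrix.mulVec M (fun k => N k j) := by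
  ext i
  simp [Matrix.mul_apply, Matrix.mulVec, dotProduct]

lemma pnscMulVecDot (Q : Matrix (Fin n) (Fin n) K) (v : Fin n → K) (i : Fin n) :
    Matrix.mulVec Q v i = dotProduct (Q i) v := rfl

end Aux4

set_option maxHeartbeats 2000000 in
theorem products_not_spanning_classification (K : Type*) [Field K] (n : ℕ) (hn : 0 < n)
    (V W : Submodule K (Matrix (Fin n) (Fin n) K))
    (hcodim : (n ^ 2 - Module.finrank K V) + (n ^ 2 - Module.finrank K W) = n)
    (hspan : Submodule.span K {M : Matrix (Fin n) (Fin n) K | ∃ B ∈ V, ∃ C ∈ W, M = B * C} ≠ ⊤) :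
    ∃ (p : ℕ), p ≤ n ∧ ∃ P Q R : Matrix (Fin n) (Fin n) K,
      IsUnit P ∧ IsUnit Q ∧ IsUnit R ∧
      (V : Set (Matrix (Fin n) (Fin n) K)) =
        (fun M => P * M * Q) '' {M : Matrix (Fin n) (Fin n) K |
          ∀ j : Fin n, (j : ℕ) < p → M ⟨0, hn⟩ j = 0} ∧
      (W : Set (Matrix (Fin n) (Fin n) K)) =
        (fun M => Q⁻¹ * M * R) '' {M : Matrix (Fin n) (Fin n) K |
          ∀ i : Fin n, p ≤ (i : ℕ) → M i ⟨0, hn⟩ = 0} := by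
  classical
  -- basic dimension facts
  have hfinM : finrank K (Matrix (Fin n) (Fin n) K) = n ^ 2 := by
    rw [Module.finrank_matrix]
    simp [Fintype.card_fin, Module.finrank_self, pow_two]
  have ha : finrank K V ≤ n ^ 2 := hfinM ▸ V.finrank_le
  have hb : finrank K W ≤ n ^ 2 := hfinM ▸ W.finrank_le
  have hnn : n ≤ n ^ 2 := by nlinarith
  -- extract a nonzero functional vanishing on products
  obtain ⟨φ, hφ0, hφmap⟩ :=
    Submodule.exists_dual_map_eq_bot_of_lt_top (lt_of_le_of_ne le_top hspan) inferInstance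
  have hφprod : ∀ B ∈ V, ∀ C ∈ W, φ (B * C) = 0 := by
    intro B hB C hC
    have hmem : B * C ∈ Submodule.span K
        {M : Matrix (Fin n) (Fin n) K | ∃ B ∈ V, ∃ C ∈ W, M = B * C} :=
      Submodule.subset_span ⟨B, hB, C, hC, rfl⟩
    have h2 : φ (B * C) ∈ Submodule.map φ (Submodule.span K
        {M : Matrix (Fin n) (Fin n) K | ∃ B ∈ V, ∃ C ∈ W, M = B * C}) :=
      Submodule.mem_map_of_mem hmem
    rw [hφmap] at h2
    exact (Submodule.mem_bot K).mp h2
  -- represent φ by a matrix A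
  obtain ⟨A, hA⟩ := pairDualAux_surjective φ
  have hA0 : A ≠ 0 := by
    intro h
    apply hφ0
    rw [← hA, h, map_zero]
  -- the rank bound
  obtain ⟨T, hT⟩ : ∃ T' : Matrix (Fin n) (Fin n) K →ₗ[K]
      Module.Dual K (Matrix (Fin n) (Fin n) K),
      T' = (pairDualAux K n) ∘ₗ (tmatAux A) := ⟨_, rfl⟩
  have hTV : Submodule.map T V ≤ W.dualAnnihilator := by
    rintro _ ⟨B, hB, rfl⟩
    rw [Submodule.mem_dualAnnihilator]
    intro C hC
    rw [hT]
    show pairDualAux K n ((tmatAux A) B) C = 0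
    have h1 : (tmatAux A) B = Bᵀ * A := rfl
    rw [h1, ← pairDualAux_mul, hA]
    exact hφprod B hB C hC
  have e3 : finrank K W.dualAnnihilator + finrank K W = n ^ 2 := by
    have h1 : finrank K ((Matrix (Fin n) (Fin n) K) ⧸ W) = finrank K W.dualAnnihilator :=
      LinearEquiv.finrank_eq (Subspace.quotEquivAnnihilator W)
    have h2 := Submodule.finrank_quotient_add_finrank W
    rw [hfinM] at h2
    omega
  have e1 := LinearMap.finrank_range_add_finrank_ker (T.domRestrict V)
  rw [LinearMap.range_domRestrict] at e1
  have e2 : finrank K (Submodule.map T V) ≤ finrank K W.dualAnnihilator :=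
    Submodule.finrank_mono hTV
  have e4 : finrank K (LinearMap.ker (T.domRestrict V)) ≤ finrank K (LinearMap.ker T) :=
    finrank_ker_domRestrict_le T V
  have e5 : LinearMap.ker T = LinearMap.ker (tmatAux A) := by
    ext B
    simp only [LinearMap.mem_ker, hT, LinearMap.comp_apply]
    constructor
    · intro h
      apply pairDualAux_injective
      rw [map_zero]
      exact h
    · intro h
      rw [h, map_zero]
  have e5' : finrank K (LinearMap.ker T) = n * finrank K (LinearMap.ker A.vecMulLinear) := by
    rw [e5]
    exact finrank_ker_tmatAux A
  have e7 : finrank K (LinearMap.ker A.vecMulLinear) + A.rank = n :=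
    finrank_ker_vecMulLinear A
  have hnk : n * finrank K (LinearMap.ker A.vecMulLinear) + n * A.rank = n ^ 2 := by
    rw [← Nat.mul_add, e7, pow_two]
  have hr1 : A.rank ≤ 1 := by
    have hnr : n * A.rank ≤ n * 1 := by omega
    exact Nat.le_of_mul_le_mul_left hnr hn
  obtain ⟨x, y, hx, hy, hAxy⟩ := rank_one_decomp A hA0 hr1
  have hφform : ∀ M : Matrix (Fin n) (Fin n) K,
      φ M = dotProduct x (Matrix.mulVec M y) := by
    intro M
    rw [← hA, pairDualAux_apply]
    simp only [dotProduct, Matrix.mulVec, Finset.mul_sum]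
    refine Finset.sum_congr rfl fun i _ => Finset.sum_congr rfl fun j _ => ?_
    rw [hAxy]
    ring
  have horth : ∀ B ∈ V, ∀ C ∈ W,
      dotProduct (Matrix.vecMul x B) (Matrix.mulVec C y) = 0 := by
    intro B hB C hC
    have h1 := hφprod B hB C hC
    rw [hφform, ← Matrix.mulVec_mulVec, dotProduct_mulVec] at h1
    exact h1
  -- the subspaces U1, Up
  obtain ⟨f, hf⟩ : ∃ f' : Matrix (Fin n) (Fin n) K →ₗ[K] (Fin n → K),
      f' = rowMulAux (K := K) (n := n) x := ⟨_, rfl⟩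
  obtain ⟨g, hg⟩ : ∃ g' : Matrix (Fin n) (Fin n) K →ₗ[K] (Fin n → K),
      g' = colMulAux (K := K) (n := n) y := ⟨_, rfl⟩
  obtain ⟨U1, hU1⟩ : ∃ U1' : Submodule K (Fin n → K), U1' = Submodule.map f V := ⟨_, rfl⟩
  obtain ⟨Up, hUp⟩ : ∃ Up' : Submodule K (Fin n → K), Up' = dotPerpAux U1 := ⟨_, rfl⟩
  -- dimension bookkeeping
  have hkerf : finrank K (LinearMap.ker f) = n ^ 2 - n := by
    have h1 := LinearMap.finrank_range_add_finrank_ker f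
    rw [hfinM, hf, LinearMap.range_eq_top.mpr (rowMulAux_surjective hx), finrank_top,
      Module.finrank_fin_fun, ← hf] at h1
    omega
  have hkerg : finrank K (LinearMap.ker g) = n ^ 2 - n := by
    have h1 := LinearMap.finrank_range_add_finrank_ker g
    rw [hfinM, hg, LinearMap.range_eq_top.mpr (colMulAux_surjective hy), finrank_top,
      Module.finrank_fin_fun, ← hg] at h1
    omega
  have ha1 : finrank K V ≤ finrank K U1 + (n ^ 2 - n) := by
    have h1 := LinearMap.finrank_range_add_finrank_ker (f.domRestrict V)
    rw [LinearMap.range_domRestrict, ← hU1] at h1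
    have h2 := finrank_ker_domRestrict_le f V
    omega
  have hb1 : finrank K W ≤ finrank K (Submodule.map g W) + (n ^ 2 - n) := by
    have h1 := LinearMap.finrank_range_add_finrank_ker (g.domRestrict W)
    rw [LinearMap.range_domRestrict] at h1
    have h2 := finrank_ker_domRestrict_le g W
    omega
  have hU2p : Submodule.map g W ≤ Up := by
    rintro _ ⟨C, hC, rfl⟩
    rw [hUp, mem_dotPerpAux]
    intro u hu
    rw [hU1] at hu
    obtain ⟨B, hB, rfl⟩ := hu
    rw [hf, hg]
    exact horth B hB C hC
  have hperp1 : finrank K U1 + finrank K Up = n := by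
    rw [hUp]
    exact finrank_dotPerpAux U1
  have hU2Up : finrank K (Submodule.map g W) ≤ finrank K Up := Submodule.finrank_mono hU2p
  obtain ⟨p, hp⟩ : ∃ p' : ℕ, p' = n ^ 2 - finrank K V := ⟨_, rfl⟩
  have hpn : p ≤ n := by omega
  have hd1v : finrank K U1 = n - p := by omega
  have hUpv : finrank K Up = p := by omega
  have hbv : finrank K W = p + (n ^ 2 - n) := by omega
  -- V and W as preimages
  have hVcomap : V = Submodule.comap f U1 := by
    apply Submodule.eq_of_le_of_finrank_le
    · intro B hB
      rw [Submodule.mem_comap, hU1]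
      exact Submodule.mem_map_of_mem hB
    · have h1 := finrank_comap_le f U1
      omega
  have hWcomap : W = Submodule.comap g Up := by
    apply Submodule.eq_of_le_of_finrank_le
    · intro C hC
      rw [Submodule.mem_comap]
      exact hU2p (Submodule.mem_map_of_mem hC)
    · have h1 := finrank_comap_le g Up
      omega
  have hVmem : ∀ B, B ∈ V ↔ Matrix.vecMul x B ∈ U1 := by
    intro B
    rw [hVcomap, Submodule.mem_comap, hf]
    exact Iff.rfl
  have hWmem : ∀ C, C ∈ W ↔ Matrix.mulVec C y ∈ Up := by
    intro C
    rw [hWcomap, Submodule.mem_comap, hg]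
    exact Iff.rfl
  -- bases
  have hd1'' : finrank K U1 = n - p := hd1v
  obtain ⟨bq, hbq1, hbq2⟩ := exists_adapted_basis U1 (show p + (n - p) = n by omega)
    (finBasisOfFinrankEq K _ hd1'')
  obtain ⟨bx, hbx⟩ := exists_basis_head hn x hx
  obtain ⟨by', hby⟩ := exists_basis_head hn y hy
  obtain ⟨N, hNdef⟩ : ∃ N' : Matrix (Fin n) (Fin n) K,
      N' = Matrix.of fun i j => bx i j := ⟨_, rfl⟩
  obtain ⟨Q, hQdef⟩ : ∃ Q' : Matrix (Fin n) (Fin n) K,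
      Q' = Matrix.of fun i j => bq i j := ⟨_, rfl⟩
  obtain ⟨Ny, hNydef⟩ : ∃ Ny' : Matrix (Fin n) (Fin n) K,
      Ny' = Matrix.of fun i j => by' i j := ⟨_, rfl⟩
  have hNu : IsUnit N := hNdef ▸ isUnit_rowsBasis bx
  have hQu : IsUnit Q := hQdef ▸ isUnit_rowsBasis bq
  have hNyu : IsUnit Ny := hNydef ▸ isUnit_rowsBasis by'
  have hNd : IsUnit N.det := (Matrix.isUnit_iff_isUnit_det N).mp hNu
  have hQd : IsUnit Q.det := (Matrix.isUnit_iff_isUnit_det Q).mp hQu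
  have hNyTd : IsUnit (Nyᵀ).det := by
    rw [Matrix.det_transpose]
    exact (Matrix.isUnit_iff_isUnit_det Ny).mp hNyu
  have hPu : IsUnit N⁻¹ := Matrix.isUnit_nonsing_inv_iff.mpr hNu
  have hRu : IsUnit (Nyᵀ)⁻¹ := Matrix.isUnit_nonsing_inv_iff.mpr
    ((Matrix.isUnit_iff_isUnit_det _).mpr hNyTd)
  -- row facts
  have hNe0 : N ⟨0, hn⟩ = x := by
    rw [hNdef]
    ext j
    show bx ⟨0, hn⟩ j = x j
    rw [hbx]
  have hNyTcol : (fun k => Nyᵀ k ⟨0, hn⟩) = y := by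
    rw [hNydef]
    ext k
    show by' ⟨0, hn⟩ k = y k
    rw [hby]
  have hQrow : ∀ i : Fin n, Q i = bq i := by
    intro i
    rw [hQdef]
    rfl
  have hbqmem : ∀ i : Fin n, p ≤ (i : ℕ) → bq i ∈ U1 := by
    intro i hi
    rw [← hbq2]
    exact Submodule.subset_span ⟨i, hi, rfl⟩
  -- membership characterization via Q
  have hU1Q : ∀ w : Fin n → K, w ∈ U1 ↔
      ∀ j : Fin n, (j : ℕ) < p → Matrix.vecMul w Q⁻¹ j = 0 := by
    intro w
    constructor
    · intro hw
      rw [← hbq2] at hw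
      induction hw using Submodule.span_induction with
      | mem u hu =>
        obtain ⟨i, hi, rfl⟩ := hu
        have hi' : p ≤ (i : ℕ) := hi
        intro j hj
        have h1 : bq i = Matrix.vecMul (Pi.single i 1) Q := by
          rw [pnscSingleVecMul, hQrow]
        rw [h1, Matrix.vecMul_vecMul, Matrix.mul_nonsing_inv Q hQd, Matrix.vecMul_one]
        have hij : j ≠ i := by
          intro h
          rw [h] at hj
          omega
        simp [Pi.single_apply, hij]
      | zero =>
        intro j hj
        show ∑ k, (0 : Fin n → K) k * Q⁻¹ k j = 0
        simp
      | add u v _ _ hu hv =>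
        intro j hj
        have h1 : ∑ k, u k * Q⁻¹ k j = 0 := hu j hj
        have h2 : ∑ k, v k * Q⁻¹ k j = 0 := hv j hj
        show ∑ k, (u + v) k * Q⁻¹ k j = 0
        simp only [Pi.add_apply, add_mul, Finset.sum_add_distrib, h1, h2, add_zero]
      | smul c u _ hu =>
        intro j hj
        have h1 : ∑ k, u k * Q⁻¹ k j = 0 := hu j hj
        show ∑ k, (c • u) k * Q⁻¹ k j = 0
        simp only [Pi.smul_apply, smul_eq_mul, mul_assoc, ← Finset.mul_sum, h1, mul_zero]
    · intro hw
      have hwQ : w = Matrix.vecMul (Matrix.vecMul w Q⁻¹) Q := by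
        rw [Matrix.vecMul_vecMul, Matrix.nonsing_inv_mul Q hQd, Matrix.vecMul_one]
      rw [hwQ, pnscVecMulSum]
      apply Submodule.sum_mem
      intro i _
      by_cases hi : p ≤ (i : ℕ)
      · exact Submodule.smul_mem _ _ (hQrow i ▸ hbqmem i hi)
      · rw [hw i (by omega)]
        simp
  have hUpQ : ∀ v : Fin n → K, v ∈ Up ↔
      ∀ i : Fin n, p ≤ (i : ℕ) → dotProduct (bq i) v = 0 := by
    intro v
    constructor
    · intro hv i hi
      rw [hUp, mem_dotPerpAux] at hv
      exact hv (bq i) (hbqmem i hi)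
    · intro hv
      rw [hUp, mem_dotPerpAux]
      intro u hu
      rw [← hbq2] at hu
      induction hu using Submodule.span_induction with
      | mem u hu =>
        obtain ⟨i, hi, rfl⟩ := hu
        exact hv i hi
      | zero => simp
      | add u₁ u₂ _ _ h1 h2 =>
        rw [add_dotProduct, h1, h2]
        simp
      | smul c u _ h1 =>
        rw [smul_dotProduct, h1]
        simp
  -- assembling the result
  refine ⟨p, hpn, N⁻¹, Q, (Nyᵀ)⁻¹, hPu, hQu, hRu, ?_, ?_⟩
  · -- the V equality
    ext B
    simp only [Set.mem_image, Set.mem_setOf_eq, SetLike.mem_coe]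
    constructor
    · intro hB
      refine ⟨N * B * Q⁻¹, ?_, ?_⟩
      · intro j hj
        have hrow : (N * B * Q⁻¹) ⟨0, hn⟩ = Matrix.vecMul (Matrix.vecMul x B) Q⁻¹ := by
          rw [pnscRowMulApply, pnscRowMulApply, hNe0]
        rw [hrow]
        exact (hU1Q _).mp ((hVmem B).mp hB) j hj
      · show N⁻¹ * (N * B * Q⁻¹) * Q = B
        rw [show N⁻¹ * (N * B * Q⁻¹) * Q = (N⁻¹ * N) * B * (Q⁻¹ * Q) by
          simp only [Matrix.mul_assoc]]
        rw [Matrix.nonsing_inv_mul N hNd, Matrix.nonsing_inv_mul Q hQd,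
          Matrix.one_mul, Matrix.mul_one]
    · rintro ⟨M, hM, rfl⟩
      show N⁻¹ * M * Q ∈ V
      rw [hVmem, hU1Q]
      intro j hj
      have hxN : x = Matrix.vecMul (Pi.single ⟨0, hn⟩ 1) N := by
        rw [pnscSingleVecMul, hNe0]
      have hsim : N * ((N⁻¹ * M * Q) * Q⁻¹) = M := by
        rw [show N * ((N⁻¹ * M * Q) * Q⁻¹) = (N * N⁻¹) * M * (Q * Q⁻¹) by
          simp only [Matrix.mul_assoc]]
        rw [Matrix.mul_nonsing_inv N hNd, Matrix.mul_nonsing_inv Q hQd,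
          Matrix.one_mul, Matrix.mul_one]
      rw [hxN, Matrix.vecMul_vecMul, Matrix.vecMul_vecMul, hsim, pnscSingleVecMul]
      exact hM j hj
  · -- the W equality
    ext C
    simp only [Set.mem_image, Set.mem_setOf_eq, SetLike.mem_coe]
    constructor
    · intro hC
      refine ⟨Q * C * Nyᵀ, ?_, ?_⟩
      · intro i hi
        have hcol : (Q * C * Nyᵀ) i ⟨0, hn⟩ = Matrix.mulVec Q (Matrix.mulVec C y) i := by
          have h1 : (Q * C * Nyᵀ) i ⟨0, hn⟩
              = Matrix.mulVec (Q * C) (fun k => Nyᵀ k ⟨0, hn⟩) i :=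
            congrFun (pnscColMulApply (Q * C) Nyᵀ ⟨0, hn⟩) i
          rw [h1, hNyTcol, ← Matrix.mulVec_mulVec]
        rw [hcol]
        have h2 := (hUpQ _).mp ((hWmem C).mp hC) i hi
        rw [pnscMulVecDot, hQrow]
        exact h2
      · show Q⁻¹ * (Q * C * Nyᵀ) * (Nyᵀ)⁻¹ = C
        rw [show Q⁻¹ * (Q * C * Nyᵀ) * (Nyᵀ)⁻¹ = (Q⁻¹ * Q) * C * (Nyᵀ * (Nyᵀ)⁻¹) by
          simp only [Matrix.mul_assoc]]
        rw [Matrix.nonsing_inv_mul Q hQd, Matrix.mul_nonsing_inv (Nyᵀ) hNyTd,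
          Matrix.one_mul, Matrix.mul_one]
    · rintro ⟨M, hM, rfl⟩
      show Q⁻¹ * M * (Nyᵀ)⁻¹ ∈ W
      rw [hWmem, hUpQ]
      intro i hi
      have hyN : y = Matrix.mulVec (Nyᵀ) (Pi.single ⟨0, hn⟩ 1) := by
        rw [pnscMulVecSingle]
        exact hNyTcol.symm
      have hQbq : dotProduct (bq i) (Matrix.mulVec (Q⁻¹ * M * (Nyᵀ)⁻¹) y)
          = Matrix.mulVec Q (Matrix.mulVec (Q⁻¹ * M * (Nyᵀ)⁻¹) y) i := by
        rw [pnscMulVecDot, hQrow]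
      rw [hQbq, Matrix.mulVec_mulVec, hyN, Matrix.mulVec_mulVec]
      rw [show Q * (Q⁻¹ * M * (Nyᵀ)⁻¹) * Nyᵀ = (Q * Q⁻¹) * M * ((Nyᵀ)⁻¹ * Nyᵀ) by
        simp only [Matrix.mul_assoc]]
      rw [Matrix.mul_nonsing_inv Q hQd, Matrix.nonsing_inv_mul (Nyᵀ) hNyTd,
        Matrix.one_mul, Matrix.mul_one, pnscMulVecSingle]
      exact hM i hi
end

section
/- Let K be a field, n ≥ 2, and let 𝒱 be an affine subspace of M_n(K) with codimension strictly less than n-1. Then 𝒱 contains a matrix of rank n-1. -/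
/-!
Let `π : Mₙ(K) → Mₙ(K) ⧸ V` be the quotient map, whose target has dimension at most `n - 1`, and
let `β x y = π (x yᵀ)`; its values span the quotient. A greedy construction gives independent
`p₀, …, p_{n-2}` and `q₀, …, q_{n-2}` such that the `β pᵢ q_j` with `i ≤ j` span the quotient:
while they do not, some `y` outside the span of the `q`'s and some `x₀` have `β x₀ y` outside,
and adjoining `y` together with a new `p` that puts `x₀` in the span of the `p`'s makes the span
grow. Extend the `p`'s to a basis `b` of `Kⁿ` and write `π X - ∑ⱼ β b_{j+1} q_j` as
`∑ⱼ β w_j q_j` with `w_j ∈ span (p₀, …, p_j)`. Then `M = ∑ⱼ (b_{j+1} + w_j) q_jᵀ` lies in `X + V`,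
and the vectors `b_{j+1} + w_j` are independent, being unitriangular in `b` up to a shift, so
`M` has rank `n - 1`.
-/

open Module Submodule Set Matrix

section TriangularSpan

variable {K E Q : Type*} [Field K] [AddCommGroup E] [Module K E] [AddCommGroup Q] [Module K Q]

lemma span_range_ne_top_of_card_lt {ι : Type*} [Fintype ι] (v : ι → E)
    (h : Fintype.card ι < finrank K E) : span K (range v) ≠ ⊤ := by
  intro htop
  have := finrank_range_le_card (R := K) v
  rw [Set.finrank, htop, finrank_top] at this
  omega

lemma exists_apply_notMem_of_ne_top (β : E →ₗ[K] E →ₗ[K] Q)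
    (hβ : span K {β x y | (x : E) (y : E)} = ⊤) {S : Submodule K Q} (hS : S ≠ ⊤)
    {U : Submodule K E} (hU : U ≠ ⊤) : ∃ x, ∃ y ∉ U, β x y ∉ S := by
  obtain ⟨x, y₀, hxy₀⟩ : ∃ x y, β x y ∉ S := by
    by_contra! h
    exact hS (top_unique (hβ ▸ span_le.2 (by rintro _ ⟨x, y, rfl⟩; exact h x y)))
  by_cases hy₀ : y₀ ∈ U
  · obtain ⟨y₁, hy₁⟩ := SetLike.exists_not_mem_of_ne_top U hU
    by_cases hxy₁ : β x y₁ ∈ S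
    · refine ⟨x, y₀ + y₁, fun h => hy₁ ?_, fun h => hxy₀ ?_⟩
      · simpa using U.sub_mem h hy₀
      · simpa using S.sub_mem h hxy₁
    · exact ⟨x, y₁, hy₁, hxy₁⟩
  · exact ⟨x, y₀, hy₀, hxy₀⟩

lemma span_compr₂_eq_top {Q' : Type*} [AddCommGroup Q'] [Module K Q'] {β : E →ₗ[K] E →ₗ[K] Q}
    (hβ : span K {β x y | (x : E) (y : E)} = ⊤) {f : Q →ₗ[K] Q'} (hf : Function.Surjective f) :
    span K {β.compr₂ f x y | (x : E) (y : E)} = ⊤ := by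
  have h := congrArg (map f) hβ
  rw [map_span, Submodule.map_top, LinearMap.range_eq_top.2 hf] at h
  rw [← h]
  congr 1
  ext
  simp

variable (β : E →ₗ[K] E →ₗ[K] Q)

/-- The span of the `β (p i) (q j)` with `i ≤ j`, grouped by the column `j`. -/
def triangularSpan {m : ℕ} (p q : Fin m → E) : Submodule K Q :=
  ⨆ j, (span K (p '' Iic j)).map (β.flip (q j))

lemma image_Iic_subset_snoc_image_Iic {α : Type*} {m : ℕ} (p : Fin m → α) (x : α)
    (j : Fin m) :
    p '' Iic j ⊆ Fin.snoc p x '' Iic j.castSucc := by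
  rintro _ ⟨i, hi, rfl⟩
  exact ⟨i.castSucc, Fin.castSucc_le_castSucc_iff.2 hi, Fin.snoc_castSucc ..⟩

lemma triangularSpan_le_snoc {m : ℕ} (p q : Fin m → E) (x y : E) :
    triangularSpan β p q ≤ triangularSpan β (Fin.snoc p x) (Fin.snoc q y) :=
  iSup_le fun j => le_iSup_of_le j.castSucc <| by
    simpa using map_mono (f := β.flip (q j)) (span_mono (image_Iic_subset_snoc_image_Iic p x j))

lemma map_span_insert_le_triangularSpan_snoc {m : ℕ} (p q : Fin m → E) (x y : E) :
    (span K (insert x (range p))).map (β.flip y) ≤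
      triangularSpan β (Fin.snoc p x) (Fin.snoc q y) :=
  le_iSup_of_le (Fin.last m) <| by
    rw [Fin.snoc_last, ← Fin.top_eq_last, Iic_top, image_univ, Fin.range_snoc]

lemma exists_sum_eq_of_mem_triangularSpan {m : ℕ} {p q : Fin m → E} {z : Q}
    (hz : z ∈ triangularSpan β p q) :
    ∃ w : Fin m → E, (∀ j, w j ∈ span K (p '' Iic j)) ∧ ∑ j, β (w j) (q j) = z := by
  obtain ⟨f, hf, rfl⟩ := (mem_iSup_iff_exists_finsupp _ _).1 hz
  choose w hw hwf using fun j => mem_map.1 (hf j)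
  exact ⟨w, hw, by simp [Finsupp.sum_fintype, ← hwf]⟩

variable {β} [FiniteDimensional K Q]

lemma exists_snoc_finrank_triangularSpan_ge (hβ : span K {β x y | (x : E) (y : E)} = ⊤)
    {m : ℕ} (p q : Fin m → E) (hm : m < finrank K E) :
    ∃ x ∉ span K (range p), ∃ y ∉ span K (range q),
      min (finrank K Q) (finrank K (triangularSpan β p q) + 1) ≤
        finrank K (triangularSpan β (Fin.snoc p x) (Fin.snoc q y)) := by
  have hp := span_range_ne_top_of_card_lt p (by simpa using hm)
  have hq := span_range_ne_top_of_card_lt q (by simpa using hm)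
  by_cases hS : triangularSpan β p q = ⊤
  · obtain ⟨x, hx⟩ := SetLike.exists_not_mem_of_ne_top _ hp
    obtain ⟨y, hy⟩ := SetLike.exists_not_mem_of_ne_top _ hq
    refine ⟨x, hx, y, hy, ?_⟩
    have hfull : finrank K (triangularSpan β p q) = finrank K Q := by rw [hS, finrank_top]
    have hmono := Submodule.finrank_mono (triangularSpan_le_snoc β p q x y)
    omega
  · obtain ⟨x₀, y, hy, hx₀y⟩ := exists_apply_notMem_of_ne_top β hβ hS hq
    obtain ⟨x, hx, hx₀⟩ : ∃ x ∉ span K (range p), x₀ ∈ span K (insert x (range p)) := by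
      by_cases h : x₀ ∈ span K (range p)
      · obtain ⟨x, hx⟩ := SetLike.exists_not_mem_of_ne_top _ hp
        exact ⟨x, hx, span_mono (subset_insert _ _) h⟩
      · exact ⟨x₀, h, subset_span (mem_insert _ _)⟩
    refine ⟨x, hx, y, hy, (min_le_right _ _).trans (finrank_lt_finrank_of_lt ?_)⟩
    exact SetLike.lt_iff_le_and_exists.2 ⟨triangularSpan_le_snoc β p q x y, β x₀ y,
      map_span_insert_le_triangularSpan_snoc β p q x y (mem_map_of_mem hx₀), hx₀y⟩

lemma exists_linearIndependent_min_le_finrank_triangularSpan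
    (hβ : span K {β x y | (x : E) (y : E)} = ⊤) {m : ℕ} (hm : m ≤ finrank K E) :
    ∃ p q : Fin m → E, LinearIndependent K p ∧ LinearIndependent K q ∧
      min (finrank K Q) m ≤ finrank K (triangularSpan β p q) := by
  induction m with
  | zero => exact ⟨Fin.elim0, Fin.elim0, linearIndependent_empty_type,
      linearIndependent_empty_type, by simp⟩
  | succ m ih =>
    obtain ⟨p, q, hp, hq, hpq⟩ := ih (by omega)
    obtain ⟨x, hx, y, hy, hxy⟩ := exists_snoc_finrank_triangularSpan_ge hβ p q (by omega)
    exact ⟨_, _, hp.finSnoc hx, hq.finSnoc hy, le_trans (by omega) hxy⟩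

theorem exists_linearIndependent_triangularSpan_eq_top
    (hβ : span K {β x y | (x : E) (y : E)} = ⊤) {m : ℕ} (hQ : finrank K Q ≤ m)
    (hm : m ≤ finrank K E) :
    ∃ p q : Fin m → E, LinearIndependent K p ∧ LinearIndependent K q ∧
      triangularSpan β p q = ⊤ := by
  obtain ⟨p, q, hp, hq, hpq⟩ := exists_linearIndependent_min_le_finrank_triangularSpan hβ hm
  exact ⟨p, q, hp, hq, eq_top_of_finrank_eq ((finrank_le _).antisymm (by omega))⟩

end TriangularSpan

lemma linearIndependent_succ_add_of_mem_span {K E : Type*} [Field K] [AddCommGroup E]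
    [Module K E] {m : ℕ} {b : Fin (m + 1) → E} (hb : LinearIndependent K b) {w : Fin m → E}
    (hw : ∀ j, w j ∈ span K (b '' Iic j.castSucc)) :
    LinearIndependent K fun j => b j.succ + w j := by
  set v : Fin (m + 1) → E := Fin.cons (b 0) fun j => b j.succ + w j
  have hflag : ∀ r, span K (b '' Iic r) ≤ span K (range v) := by
    intro r
    induction r using Fin.induction with
    | zero =>
      refine span_le.2 ?_
      rintro _ ⟨i, hi, rfl⟩
      rw [Fin.le_zero_iff.1 (mem_Iic.1 hi)]
      exact subset_span ⟨0, rfl⟩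
    | succ j ih =>
      refine span_le.2 ?_
      rintro _ ⟨i, hi, rfl⟩
      rcases (show i ≤ j.succ from hi).lt_or_eq with hlt | rfl
      · exact ih (subset_span ⟨i, Fin.le_castSucc_iff.2 hlt, rfl⟩)
      · have hvj : v j.succ = b j.succ + w j := Fin.cons_succ ..
        have hv_mem : v j.succ ∈ span K (range v) := subset_span ⟨j.succ, rfl⟩
        simpa [hvj] using sub_mem hv_mem (ih (hw j))
  have hv : LinearIndependent K v := by
    have := Module.Finite.span_of_finite K (finite_range v)
    have hle := finrank_mono (by simpa [← Fin.top_eq_last] using hflag (Fin.last m))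
    rw [linearIndependent_iff_card_eq_finrank_span] at hb
    exact linearIndependent_iff_card_le_finrank_span.2 (hb.trans_le hle)
  exact (linearIndependent_finSucc.1 hv).1

namespace Matrix

variable {K : Type*} [Field K]

lemma rank_mul_eq_left_of_linearIndependent_row {l m n : Type*} [Fintype m] [Fintype n]
    (A : Matrix l m K) {B : Matrix m n K} (hB : LinearIndependent K B.row) :
    (A * B).rank = A.rank := by
  have hB_surj : LinearMap.range B.mulVecLin = ⊤ :=
    eq_top_of_finrank_eq (by rw [← rank, hB.rank_matrix, finrank_fintype_fun_eq_card])
  rw [rank, rank, mulVecLin_mul, LinearMap.range_comp_of_range_eq_top _ hB_surj]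

lemma rank_sum_vecMulVec {ι m n : Type*} [Fintype ι] [Fintype m] [Fintype n]
    {u : ι → m → K} {v : ι → n → K} (hu : LinearIndependent K u) (hv : LinearIndependent K v) :
    (∑ i, vecMulVec (u i) (v i)).rank = Fintype.card ι := by
  have h : ∑ i, vecMulVec (u i) (v i) = (of u)ᵀ * of v := by
    ext; simp [Matrix.sum_apply, vecMulVec_apply, mul_apply]
  rw [h, rank_mul_eq_left_of_linearIndependent_row _ (B := of v) hv, rank_transpose]
  exact LinearIndependent.rank_matrix (M := of u) hu

lemma span_vecMulVec_eq_top {m n : Type*} [Fintype m] [Fintype n] [DecidableEq m]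
    [DecidableEq n] :
    span K {vecMulVec x y | (x : m → K) (y : n → K)} = ⊤ := by
  refine eq_top_iff'.2 fun A => ?_
  rw [matrix_eq_sum_single A]
  refine sum_mem fun i _ => sum_mem fun j _ =>
    subset_span ⟨Pi.single i (A i j), Pi.single j 1, ?_⟩
  ext; simp [vecMulVec_apply, single, Pi.single_apply, ← ite_and, and_comm, eq_comm]

end Matrix

theorem affine_subspace_contains_rank_sub_one_general (K : Type*) [Field K] (n : ℕ)
    (V : Submodule K (Matrix (Fin n) (Fin n) K)) (X : Matrix (Fin n) (Fin n) K)
    (hV : n ^ 2 - Module.finrank K V < n - 1) :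
    ∃ M : Matrix (Fin n) (Fin n) K, M - X ∈ V ∧ M.rank = n - 1 := by
  obtain ⟨m, rfl⟩ : ∃ m, n = m + 1 := ⟨n - 1, by omega⟩
  set β := (vecMulVecBilin K K).compr₂ V.mkQ
  have hβ : span K {β x y | (x : Fin (m + 1) → K) (y : Fin (m + 1) → K)} = ⊤ :=
    span_compr₂_eq_top span_vecMulVec_eq_top V.mkQ_surjective
  have hcodim : finrank K (Matrix (Fin (m + 1)) (Fin (m + 1)) K ⧸ V) ≤ m := by
    have := V.finrank_quotient_add_finrank
    rw [finrank_matrix, finrank_self, Fintype.card_fin, ← sq] at this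
    omega
  obtain ⟨p, q, hp, hq, htop⟩ := exists_linearIndependent_triangularSpan_eq_top hβ hcodim (by simp)
  obtain ⟨x, hx⟩ := SetLike.exists_not_mem_of_ne_top _
    (span_range_ne_top_of_card_lt (K := K) p (by simp))
  set b : Fin (m + 1) → Fin (m + 1) → K := Fin.snoc p x
  obtain ⟨w, hw, hsum⟩ := exists_sum_eq_of_mem_triangularSpan β
    (htop ▸ mem_top : V.mkQ X - ∑ j, β (b j.succ) (q j) ∈ triangularSpan β p q)
  refine ⟨∑ j, vecMulVec (b j.succ + w j) (q j), ?_, ?_⟩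
  · have hM : V.mkQ (∑ j, vecMulVec (b j.succ + w j) (q j)) =
        ∑ j, β (b j.succ) (q j) + ∑ j, β (w j) (q j) := by
      simp only [β, LinearMap.compr₂_apply, vecMulVecBilin_apply_apply, add_vecMulVec,
        Finset.sum_add_distrib, map_add, map_sum]
    rw [hsum, add_sub_cancel] at hM
    exact (Submodule.Quotient.eq V).1 hM
  · rw [rank_sum_vecMulVec _ hq, Fintype.card_fin, Nat.add_sub_cancel]
    exact linearIndependent_succ_add_of_mem_span (hp.finSnoc hx)
      fun j => span_mono (image_Iic_subset_snoc_image_Iic p x j) (hw j)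

theorem affine_subspace_contains_rank_sub_one (K : Type*) [Field K] (n : ℕ) (hn : 2 ≤ n)
    (V : Submodule K (Matrix (Fin n) (Fin n) K)) (X : Matrix (Fin n) (Fin n) K)
    (hV : n ^ 2 - Module.finrank K V < n - 1) :
    ∃ M : Matrix (Fin n) (Fin n) K, M - X ∈ V ∧ M.rank = n - 1 :=
  affine_subspace_contains_rank_sub_one_general K n V X hV
end

section
/- Let K be a field, n ≥ 1, and let 𝒱' be an affine subspace of M_n(K) with codimension strictly less than n-1. Let C be a nonzero column vector in K^n, and suppose some element of 𝒱' has C as its first column. Then some invertible element of 𝒱' has C as its first column. -/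
/-!
Write `n = m + 1`, let `v ≠ 0` be the first column of some matrix of `X + V`, and let `u` be
invertible with first column `v`. Multiplying by `u⁻¹` turns the matrices of `X + V` with first
column `v` into matrices with first column `e₀`, whose determinant is that of their lower-right
`m × m` block. These blocks fill an affine subspace of `M_m(K)` of dimension `dim V - s - f`,
where `s ≤ m + 1` is the dimension of the first columns of `V` and `f ≤ m` that of
`V ∩ {v (0, r)ᵀ}`. When `codim V < m`, this block space has codimension `< m`.

So it suffices that an affine subspace of `M_n(K)` of codimension `< n` contains an invertible
matrix. This follows by the same reduction and induction on `n`, choosing the pivot `v`. If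
`V` contains every matrix with zero first column, some invertible matrix with first column `v`
already lies in `X + V`. Otherwise either `s ≤ m`, or every column is attained and some
`eᵢ (0, r)ᵀ ∉ V`; then the pivot `eᵢ` has `f < m`.
-/

open Matrix Module Submodule

theorem Submodule.finrank_map_add_finrank_inf_ker {K M N : Type*} [DivisionRing K]
    [AddCommGroup M] [Module K M] [AddCommGroup N] [Module K N] [FiniteDimensional K M]
    (p : Submodule K M) (f : M →ₗ[K] N) :
    finrank K (p.map f) + finrank K ↥(p ⊓ LinearMap.ker f) = finrank K p := by
  rw [← LinearMap.range_domRestrict, ← (f.domRestrict p).finrank_range_add_finrank_ker,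
    LinearMap.ker_domRestrict]
  congr 1
  have : (LinearMap.ker f).comap p.subtype = (p ⊓ LinearMap.ker f).comap p.subtype := by
    ext x; simp
  rw [this]
  exact (comapSubtypeEquivOfLe inf_le_left).finrank_eq.symm

namespace Matrix

theorem exists_units_col_eq {K n : Type*} [Field K] [Fintype n] [DecidableEq n] (j₀ : n)
    {v : n → K} (hv : v ≠ 0) : ∃ u : (Matrix n n K)ˣ, (u : Matrix n n K).col j₀ = v := by
  obtain ⟨j, hj⟩ := Function.ne_iff.mp hv
  set u := (updateCol 1 j v).submatrix id (Equiv.swap j₀ j)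
  have hdet : u.det = Equiv.Perm.sign (Equiv.swap j₀ j) * v j := by
    rw [det_permute', ← cramer_apply, cramer_one]
    rfl
  refine ⟨(u.isUnit_iff_isUnit_det.mpr ?_).unit, ?_⟩
  · rw [hdet]
    exact ((Units.isUnit _).map (Int.castRingHom K)).mul (isUnit_iff_ne_zero.mpr hj)
  · ext i; simp [u]

section CommRing

variable {R : Type*} [CommRing R] {m : ℕ}

variable (R m) in
def firstCol : Matrix (Fin (m + 1)) (Fin (m + 1)) R →ₗ[R] Fin (m + 1) → R where
  toFun A i := A i 0
  map_add' _ _ := rfl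
  map_smul' _ _ := rfl

variable (R m) in
def lowerRight : Matrix (Fin (m + 1)) (Fin (m + 1)) R →ₗ[R] Matrix (Fin m) (Fin m) R where
  toFun A := A.submatrix Fin.succ Fin.succ
  map_add' _ _ := rfl
  map_smul' _ _ := rfl

def vecMulVecConsZero (v : Fin (m + 1) → R) :
    (Fin m → R) →ₗ[R] Matrix (Fin (m + 1)) (Fin (m + 1)) R where
  toFun r := vecMulVec v (Fin.cons 0 r)
  map_add' r s := by
    ext i j; cases j using Fin.cases <;> simp [vecMulVec_apply, mul_add]
  map_smul' c r := by
    ext i j; cases j using Fin.cases <;> simp [vecMulVec_apply, mul_left_comm]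

@[simp]
theorem firstCol_apply (A : Matrix (Fin (m + 1)) (Fin (m + 1)) R) (i : Fin (m + 1)) :
    firstCol R m A i = A i 0 := rfl

@[simp]
theorem lowerRight_apply (A : Matrix (Fin (m + 1)) (Fin (m + 1)) R) :
    lowerRight R m A = A.submatrix Fin.succ Fin.succ := rfl

theorem firstCol_mul (u A : Matrix (Fin (m + 1)) (Fin (m + 1)) R) :
    firstCol R m (u * A) = u *ᵥ firstCol R m A := by
  ext i; simp [mul_apply, mulVec, dotProduct]

theorem mul_vecMulVecConsZero (u : Matrix (Fin (m + 1)) (Fin (m + 1)) R) (v : Fin (m + 1) → R)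
    (r : Fin m → R) : u * vecMulVecConsZero v r = vecMulVecConsZero (u *ᵥ v) r :=
  mul_vecMulVec u v _

theorem det_eq_det_lowerRight {A : Matrix (Fin (m + 1)) (Fin (m + 1)) R}
    (hA : firstCol R m A = Pi.single 0 1) : A.det = (lowerRight R m A).det := by
  have hA' (i) : A i 0 = (Pi.single 0 1 : Fin (m + 1) → R) i := congr_fun hA i
  rw [det_succ_column_zero, Fin.sum_univ_succ]
  simp [hA']

theorem ker_firstCol_inf_ker_lowerRight_le :
    LinearMap.ker (firstCol R m) ⊓ LinearMap.ker (lowerRight R m) ≤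
      LinearMap.range (vecMulVecConsZero (Pi.single 0 1)) := by
  rintro A ⟨hcol, hlr⟩
  refine ⟨fun j => A 0 j.succ, ?_⟩
  have hcol' (i) : A i 0 = 0 := congr_fun hcol i
  have hlr' (i j : Fin m) : A i.succ j.succ = 0 := congr_fun (congr_fun hlr i) j
  ext i j
  cases i using Fin.cases <;> cases j using Fin.cases <;>
    simp [vecMulVecConsZero, vecMulVec_apply, hcol', hlr']

theorem ker_firstCol_le_of_forall_vecMulVecConsZero_mem
    {V : Submodule R (Matrix (Fin (m + 1)) (Fin (m + 1)) R)}
    (hV : ∀ i r, vecMulVecConsZero (Pi.single i 1) r ∈ V) :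
    LinearMap.ker (firstCol R m) ≤ V := by
  intro A hA
  have hA' (i) : A i 0 = 0 := congr_fun hA i
  have hsum : A = ∑ i, vecMulVecConsZero (Pi.single i 1) (fun j => A i j.succ) := by
    ext i j
    cases j using Fin.cases <;>
      simp [vecMulVecConsZero, vecMulVec_apply, Matrix.sum_apply, Pi.single_apply, hA']
  rw [hsum]
  exact Submodule.sum_mem _ fun i _ => hV i _

end CommRing

variable {K : Type*} [Field K] {m : ℕ}

theorem finrank_ker_firstCol : finrank K ↥(LinearMap.ker (firstCol K m)) = m ^ 2 + m := by
  have hsurj : LinearMap.range (firstCol K m) = ⊤ :=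
    LinearMap.range_eq_top.mpr fun v => ⟨of fun i _ => v i, rfl⟩
  have h := (firstCol K m).finrank_range_add_finrank_ker
  rw [hsurj, finrank_top, finrank_fin_fun, finrank_matrix, Fintype.card_fin, finrank_self,
    mul_one] at h
  have hsq : (m + 1) * (m + 1) = m ^ 2 + 2 * m + 1 := by ring
  omega

theorem finrank_inf_range_vecMulVecConsZero_le
    (V : Submodule K (Matrix (Fin (m + 1)) (Fin (m + 1)) K)) (v : Fin (m + 1) → K) :
    finrank K ↥(V ⊓ LinearMap.range (vecMulVecConsZero v)) ≤ m :=
  (Submodule.finrank_mono inf_le_right).trans <|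
    (LinearMap.finrank_range_le _).trans (finrank_fin_fun K).le

theorem finrank_inf_range_vecMulVecConsZero_lt
    {V : Submodule K (Matrix (Fin (m + 1)) (Fin (m + 1)) K)} {v : Fin (m + 1) → K}
    {r : Fin m → K} (hr : vecMulVecConsZero v r ∉ V) :
    finrank K ↥(V ⊓ LinearMap.range (vecMulVecConsZero v)) < m := by
  have hlt : V ⊓ LinearMap.range (vecMulVecConsZero v) < LinearMap.range (vecMulVecConsZero v) :=
    inf_le_right.lt_of_not_ge fun h => hr (h ⟨r, rfl⟩).1
  exact (Submodule.finrank_lt_finrank_of_lt hlt).trans_le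
    ((LinearMap.finrank_range_le _).trans (finrank_fin_fun K).le)

theorem exists_sub_mem_firstCol_ne_zero {V : Submodule K (Matrix (Fin (m + 1)) (Fin (m + 1)) K)}
    (hV : V.map (firstCol K m) ≠ ⊥) (X : Matrix (Fin (m + 1)) (Fin (m + 1)) K) :
    ∃ X', X' - X ∈ V ∧ firstCol K m X' ≠ 0 := by
  by_cases hX : firstCol K m X = 0
  · obtain ⟨_, ⟨A, hAV, rfl⟩, hA⟩ := (Submodule.ne_bot_iff _).mp hV
    exact ⟨X + A, by simpa using hAV, by rwa [map_add, hX, zero_add]⟩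
  · exact ⟨X, by simp, hX⟩

theorem exists_isUnit_sub_mem_of_isUnit_lowerRight
    {W : Submodule K (Matrix (Fin (m + 1)) (Fin (m + 1)) K)}
    {Y : Matrix (Fin (m + 1)) (Fin (m + 1)) K} (hY : firstCol K m Y = Pi.single 0 1)
    {B : Matrix (Fin m) (Fin m) K}
    (hB : B - lowerRight K m Y ∈ (W ⊓ LinearMap.ker (firstCol K m)).map (lowerRight K m))
    (hBu : IsUnit B) :
    ∃ M, M - Y ∈ W ∧ IsUnit M ∧ firstCol K m M = Pi.single 0 1 := by
  obtain ⟨A, ⟨hAW, hAcol⟩, hAB⟩ := hB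
  have hcol : firstCol K m (Y + A) = Pi.single 0 1 := by
    rw [map_add, hY, LinearMap.mem_ker.mp hAcol, add_zero]
  refine ⟨Y + A, by simpa using hAW, ?_, hcol⟩
  rw [isUnit_iff_isUnit_det, det_eq_det_lowerRight hcol, map_add, hAB, add_sub_cancel,
    ← isUnit_iff_isUnit_det]
  exact hBu

theorem sq_lt_finrank_map_lowerRight {W : Submodule K (Matrix (Fin (m + 1)) (Fin (m + 1)) K)}
    (hW : m ^ 2 + finrank K (W.map (firstCol K m)) +
      finrank K ↥(W ⊓ (LinearMap.ker (firstCol K m) ⊓ LinearMap.ker (lowerRight K m))) <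
        finrank K W + m) :
    m ^ 2 < finrank K ((W ⊓ LinearMap.ker (firstCol K m)).map (lowerRight K m)) + m := by
  have h₁ := W.finrank_map_add_finrank_inf_ker (firstCol K m)
  have h₂ := (W ⊓ LinearMap.ker (firstCol K m)).finrank_map_add_finrank_inf_ker (lowerRight K m)
  rw [inf_assoc] at h₂
  omega

theorem exists_isUnit_sub_mem_firstCol_eq
    (IH : ∀ (W : Submodule K (Matrix (Fin m) (Fin m) K)) (Y : Matrix (Fin m) (Fin m) K),
      m ^ 2 < finrank K W + m → ∃ B, B - Y ∈ W ∧ IsUnit B)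
    (V : Submodule K (Matrix (Fin (m + 1)) (Fin (m + 1)) K))
    (X : Matrix (Fin (m + 1)) (Fin (m + 1)) K) (hX : firstCol K m X ≠ 0)
    (hV : m ^ 2 + finrank K (V.map (firstCol K m)) +
      finrank K ↥(V ⊓ LinearMap.range (vecMulVecConsZero (firstCol K m X))) < finrank K V + m) :
    ∃ M, M - X ∈ V ∧ IsUnit M ∧ firstCol K m M = firstCol K m X := by
  obtain ⟨u, hu⟩ := exists_units_col_eq 0 hX
  have hue : (u : Matrix _ _ K) *ᵥ (Pi.single 0 1 : Fin (m + 1) → K) = firstCol K m X := by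
    rw [mulVec_single_one, hu]
  let e := u.mulLeftLinearEquiv K (Matrix (Fin (m + 1)) (Fin (m + 1)) K)
  set W := V.map e.symm.toLinearMap with hW
  set Y := (↑u⁻¹ : Matrix (Fin (m + 1)) (Fin (m + 1)) K) * X
  have hY : firstCol K m Y = Pi.single 0 1 := by
    rw [firstCol_mul, ← hue, mulVec_mulVec, Units.inv_mul, one_mulVec]
  have hWdim : finrank K W = finrank K V := e.symm.finrank_map_eq V
  have hWcol : finrank K (W.map (firstCol K m)) ≤ finrank K (V.map (firstCol K m)) := by
    have : (firstCol K m).comp e.symm.toLinearMap =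
        (mulVecLin (↑u⁻¹ : Matrix _ _ K)).comp (firstCol K m) :=
      LinearMap.ext fun A => firstCol_mul _ A
    rw [hW, ← Submodule.map_comp, this, Submodule.map_comp]
    exact Submodule.finrank_map_le _ _
  have hWrow :
      finrank K ↥(W ⊓ (LinearMap.ker (firstCol K m) ⊓ LinearMap.ker (lowerRight K m))) ≤
        finrank K ↥(V ⊓ LinearMap.range (vecMulVecConsZero (firstCol K m X))) := by
    rw [← e.finrank_map_eq]
    refine Submodule.finrank_mono ?_
    rintro _ ⟨A, ⟨hAW, hA⟩, rfl⟩
    obtain ⟨r, rfl⟩ := ker_firstCol_inf_ker_lowerRight_le hA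
    refine ⟨by simpa using (Submodule.mem_map_equiv (e := e.symm) (p := V)).mp hAW, r, ?_⟩
    simp [e, mul_vecMulVecConsZero, hue]
  obtain ⟨B, hBY, hB⟩ := IH ((W ⊓ LinearMap.ker (firstCol K m)).map (lowerRight K m))
    (lowerRight K m Y) (sq_lt_finrank_map_lowerRight (by omega))
  obtain ⟨M, hMY, hM, hMcol⟩ := exists_isUnit_sub_mem_of_isUnit_lowerRight hY hBY hB
  refine ⟨u * M, ?_, u.isUnit.mul hM, by rw [firstCol_mul, hMcol, hue]⟩
  have : (u : Matrix _ _ K) * M - X = e (M - Y) := by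
    simp [e, Y, mul_sub, ← Matrix.mul_assoc]
  rw [this]
  simpa using (Submodule.mem_map_equiv (e := e.symm) (p := V)).mp hMY

theorem exists_isUnit_sub_mem_of_codim_lt :
    ∀ (n : ℕ) (V : Submodule K (Matrix (Fin n) (Fin n) K)) (X : Matrix (Fin n) (Fin n) K),
      n ^ 2 < finrank K V + n → ∃ M, M - X ∈ V ∧ IsUnit M
  | 0, _, X, _ => ⟨X, by simp, isUnit_of_subsingleton X⟩
  | m + 1, V, X, hV => by
    have IH := exists_isUnit_sub_mem_of_codim_lt m
    have hsq : (m + 1) ^ 2 = m ^ 2 + 2 * m + 1 := by ring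
    have hrn := V.finrank_map_add_finrank_inf_ker (firstCol K m)
    have hVker := Submodule.finrank_mono (inf_le_right : V ⊓ LinearMap.ker (firstCol K m) ≤ _)
    rw [finrank_ker_firstCol] at hVker
    have hs : V.map (firstCol K m) ≠ ⊥ := fun h => by
      rw [h, finrank_bot] at hrn
      omega
    obtain ⟨X', hX'X, hX'⟩ := exists_sub_mem_firstCol_ne_zero hs X
    by_cases hkerV : LinearMap.ker (firstCol K m) ≤ V
    · obtain ⟨u, hu⟩ := exists_units_col_eq 0 hX'
      refine ⟨u, ?_, u.isUnit⟩
      have huX' : (u : Matrix _ _ K) - X' ∈ V :=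
        hkerV (by rw [LinearMap.mem_ker, map_sub, sub_eq_zero]; exact hu)
      exact sub_add_sub_cancel _ X' X ▸ add_mem huX' hX'X
    by_cases hsm : finrank K (V.map (firstCol K m)) ≤ m
    · obtain ⟨M, hMX', hM, -⟩ := exists_isUnit_sub_mem_firstCol_eq IH V X' hX' (by
        have := finrank_inf_range_vecMulVecConsZero_le V (firstCol K m X')
        omega)
      exact ⟨M, sub_add_sub_cancel M X' X ▸ add_mem hMX' hX'X, hM⟩
    · obtain ⟨i, r, hr⟩ : ∃ i r, vecMulVecConsZero (Pi.single i 1) r ∉ V := by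
        by_contra! h
        exact hkerV (ker_firstCol_le_of_forall_vecMulVecConsZero_mem h)
      have htop : V.map (firstCol K m) = ⊤ := by
        refine Submodule.eq_top_of_finrank_eq (le_antisymm (Submodule.finrank_le _) ?_)
        rw [finrank_fin_fun]
        omega
      obtain ⟨B, hBV, hB⟩ := htop ▸ Submodule.mem_top (x := Pi.single i 1 - firstCol K m X)
      have hcol : firstCol K m (X + B) = Pi.single i 1 := by rw [map_add, hB, add_sub_cancel]
      obtain ⟨M, hMX, hM, -⟩ := exists_isUnit_sub_mem_firstCol_eq IH V (X + B)
        (by rw [hcol]; exact Pi.single_ne_zero_iff.mpr one_ne_zero) (by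
          have := finrank_inf_range_vecMulVecConsZero_lt (hcol ▸ hr)
          have := Submodule.finrank_le (V.map (firstCol K m))
          rw [finrank_fin_fun] at this
          omega)
      exact ⟨M, sub_add_sub_cancel M (X + B) X ▸ add_mem hMX (by simpa using hBV), hM⟩

end Matrix

theorem affine_subspace_invertible_with_first_column (K : Type*) [Field K] (n : ℕ) (hn : 0 < n)
    (V : Submodule K (Matrix (Fin n) (Fin n) K)) (X : Matrix (Fin n) (Fin n) K)
    (hV : n ^ 2 - Module.finrank K V < n - 1)
    (C : Fin n → K) (hC : C ≠ 0)
    (hex : ∃ M : Matrix (Fin n) (Fin n) K, M - X ∈ V ∧ ∀ i, M i ⟨0, hn⟩ = C i) :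
    ∃ M : Matrix (Fin n) (Fin n) K, M - X ∈ V ∧ IsUnit M ∧ ∀ i, M i ⟨0, hn⟩ = C i := by
  obtain ⟨m, rfl⟩ : ∃ m, n = m + 1 := ⟨n - 1, by omega⟩
  obtain ⟨M₀, hM₀X, hM₀⟩ := hex
  have hcol : firstCol K m M₀ = C := funext hM₀
  have hsq : (m + 1) ^ 2 = m ^ 2 + 2 * m + 1 := by ring
  have hs := Submodule.finrank_le (V.map (firstCol K m))
  rw [finrank_fin_fun] at hs
  have hf := finrank_inf_range_vecMulVecConsZero_le V (firstCol K m M₀)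
  obtain ⟨M, hMM₀, hM, hMcol⟩ := exists_isUnit_sub_mem_firstCol_eq
    (exists_isUnit_sub_mem_of_codim_lt m) V M₀ (hcol ▸ hC) (by omega)
  exact ⟨M, sub_add_sub_cancel M M₀ X ▸ add_mem hMM₀ hM₀X, hM,
    fun i => congr_fun (hMcol.trans hcol) i⟩
end

section
/- Let K be a field and a ∈ K. Let ℋ := {M ∈ M_3(K) : tr M = a}. Then every invertible 3×3 matrix over K is a finite product of matrices belonging to ℋ. -/
/-!
If `M 0 0 ≠ 0`, then `M = (M * N) * N⁻¹` for a matrix `N` of determinant one depending on a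
parameter `t`, where `N⁻¹` has trace `a` and the trace of `M * N` is affine in `t` with slope
`M 0 0`, so `t` can be chosen to make it `a`. A general invertible `M` has some `M i 0 ≠ 0`;
multiplying by a matrix `P` whose row `0` is `eᵢ` and whose inverse has trace `a` moves that entry
to position `(0, 0)`, at the cost of one more factor.
-/

open Matrix

theorem Matrix.exists_apply_ne_zero_of_isUnit {n R : Type*} [Fintype n] [DecidableEq n]
    [CommRing R] [Nontrivial R] {M : Matrix n n R} (hM : IsUnit M) (j : n) : ∃ i, M i j ≠ 0 := by
  by_contra! h
  exact ((isUnit_iff_isUnit_det M).mp hM).ne_zero (det_eq_zero_of_column_eq_zero j h)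

theorem exists_trace_eq_mul_eq_of_apply_zero_zero_ne_zero {K : Type*} [Field K] (a : K)
    (M : Matrix (Fin 3) (Fin 3) K) (hM : M 0 0 ≠ 0) :
    ∃ A B : Matrix (Fin 3) (Fin 3) K, A.trace = a ∧ B.trace = a ∧ A * B = M := by
  set t := (a - M 0 1 + a * M 0 2 - M 1 2 - M 2 0) / M 0 0
  have hNB : !![t, 0, 1; 1, 0, 0; -a, 1, 0] * !![0, 1, 0; 0, a, 1; 1, -t, 0] = 1 := by
    simp [one_fin_three]
  refine ⟨M * !![t, 0, 1; 1, 0, 0; -a, 1, 0], !![0, 1, 0; 0, a, 1; 1, -t, 0], ?_, ?_, ?_⟩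
  · simp [trace_fin_three, mul_apply, Fin.sum_univ_three, t]
    field_simp
    ring
  · simp [trace_fin_three]
  · rw [Matrix.mul_assoc, hNB, Matrix.mul_one]

theorem exists_trace_eq_mul_eq_one_row_zero_eq_single {K : Type*} [Field K] (a : K) (i : Fin 3) :
    ∃ P Q : Matrix (Fin 3) (Fin 3) K, Q * P = 1 ∧ Q.trace = a ∧ P 0 = Pi.single i 1 := by
  fin_cases i
  · refine ⟨!![1, 0, 0; 0, 0, -1; 0, 1, a - 1], !![1, 0, 0; 0, a - 1, 1; 0, -1, 0], ?_, ?_, ?_⟩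
    · simp [one_fin_three]
    · simp [trace_fin_three]
    · ext j; fin_cases j <;> simp
  · refine ⟨!![0, 1, 0; -a, 0, 1; 1, 0, 0], !![0, 0, 1; 1, 0, 0; 0, 1, a], ?_, ?_, ?_⟩
    · simp [one_fin_three]
    · simp [trace_fin_three]
    · ext j; fin_cases j <;> simp
  · refine ⟨!![0, 0, 1; 1, 0, 0; -a, 1, 0], !![0, 1, 0; 0, a, 1; 1, 0, 0], ?_, ?_, ?_⟩
    · simp [one_fin_three]
    · simp [trace_fin_three]
    · ext j; fin_cases j <;> simp

theorem GL3_subset_trace_hyperplane_semigroup (K : Type*) [Field K] (a : K)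
    (M : Matrix (Fin 3) (Fin 3) K) (hM : IsUnit M) :
    ∃ l : List (Matrix (Fin 3) (Fin 3) K), l ≠ [] ∧ (∀ A ∈ l, A.trace = a) ∧ l.prod = M := by
  obtain ⟨i, hi⟩ := exists_apply_ne_zero_of_isUnit hM 0
  obtain ⟨P, Q, hQP, hQ, hP⟩ := exists_trace_eq_mul_eq_one_row_zero_eq_single a i
  have hPM : (P * M) 0 0 ≠ 0 := by
    simpa [mul_apply, hP, Pi.single_apply] using hi
  obtain ⟨A, B, hA, hB, hAB⟩ := exists_trace_eq_mul_eq_of_apply_zero_zero_ne_zero a (P * M) hPM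
  refine ⟨[Q, A, B], by simp, by simp [hQ, hA, hB], ?_⟩
  simp [hAB, ← Matrix.mul_assoc, hQP]
end

section
/- Let K be a field with more than 2 elements and let λ ∈ K with λ ≠ 0 and λ ≠ 1. Then every matrix in GL_3(K) is a finite product of matrices each of which is conjugate to diag(μ,1,1) for some μ ∈ K \ {0,1}. -/
/-!
Let `D(μ)` be the dilation `diag(μ, 1, …, 1)`, with `μ` in any coordinate (all are conjugate by a
permutation matrix). Invertible matrices are generated by invertible diagonal matrices, which
are products of dilations, and transvections. For `λ ∉ {0, 1}`, conjugating `D(λ)` by a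
transvection `T(α)` gives `D(λ) T(α) D(λ)⁻¹ T(-α) = T((λ - 1) α)`, so every transvection is
`D(λ)` times a conjugate of `D(λ⁻¹)`.
-/

open Function

namespace Matrix

section Identities

variable {n R : Type*} [DecidableEq n] [CommRing R]

def dilation (i : n) (μ : R) : Matrix n n R :=
  diagonal (update 1 i μ)

theorem dilation_one (i : n) : dilation i (1 : R) = 1 := by
  rw [dilation, update_one]
  exact diagonal_one

variable [Fintype n]

theorem dilation_mul_diagonal (i : n) (μ : R) (d : n → R) :
    dilation i μ * diagonal d = diagonal (update d i (μ * d i)) := by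
  rw [dilation, diagonal_mul_diagonal]
  congr 1
  ext k
  by_cases hk : k = i
  · subst hk
    simp
  · simp [hk]

theorem dilation_mul_dilation (i : n) (a b : R) :
    dilation i a * dilation i b = dilation i (a * b) := by
  have h := dilation_mul_diagonal i a (update 1 i b)
  rwa [update_self, update_idem] at h

theorem dilation_mul_transvection {i j : n} (hij : i ≠ j) (μ c : R) :
    dilation i μ * transvection i j c = transvection i j (μ * c) * dilation i μ := by
  ext a b
  simp only [dilation, diagonal_mul, mul_diagonal, transvection, add_apply, one_apply,
    single_apply, update_apply, Pi.one_apply]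
  split_ifs <;> grind

theorem transvection_mul_transvection_neg {i j : n} (hij : i ≠ j) (c : R) :
    transvection i j c * transvection i j (-c) = 1 := by
  rw [transvection_mul_transvection_same (h := hij), add_neg_cancel, transvection_zero]

theorem isUnit_transvection {i j : n} (hij : i ≠ j) (c : R) : IsUnit (transvection i j c) :=
  (isUnit_iff_isUnit_det _).2 <|
    isUnit_det_of_right_inverse (transvection_mul_transvection_neg hij c)

theorem permMatrix_mul_permMatrix_inv (σ : Equiv.Perm n) :
    σ.permMatrix R * σ⁻¹.permMatrix R = 1 := by
  rw [← permMatrix_mul, inv_mul_cancel, permMatrix_one]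

theorem isUnit_permMatrix (σ : Equiv.Perm n) : IsUnit (σ.permMatrix R) :=
  (isUnit_iff_isUnit_det _).2 (isUnit_det_of_right_inverse (permMatrix_mul_permMatrix_inv σ))

theorem permMatrix_mul_mul_inv (σ : Equiv.Perm n) (A : Matrix n n R) :
    σ.permMatrix R * A * (σ.permMatrix R)⁻¹ = A.submatrix σ σ := by
  rw [inv_eq_right_inv (permMatrix_mul_permMatrix_inv σ), PEquiv.toMatrix_toPEquiv_mul,
    PEquiv.mul_toMatrix_toPEquiv]
  rfl

theorem permMatrix_swap_mul_dilation_mul_inv (i j : n) (μ : R) :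
    (Equiv.swap i j).permMatrix R * dilation i μ * ((Equiv.swap i j).permMatrix R)⁻¹ =
      dilation j μ := by
  rw [permMatrix_mul_mul_inv, dilation, submatrix_diagonal_equiv, update_comp_equiv]
  simp [dilation]

end Identities

section Generation

variable {n K : Type*} [Fintype n] [DecidableEq n] [Field K]

theorem transvection_eq_dilation_mul_conj {i j : n} (hij : i ≠ j) {μ : K} (hμ0 : μ ≠ 0)
    (hμ1 : μ ≠ 1) (c : K) :
    transvection i j c = dilation i μ * (transvection i j (c / (μ - 1)) * dilation i μ⁻¹ *
      (transvection i j (c / (μ - 1)))⁻¹) := by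
  set α := c / (μ - 1)
  have hc : μ * α + -α = c := by
    have : μ - 1 ≠ 0 := sub_ne_zero.2 hμ1
    simp only [α]
    field_simp
    ring
  rw [inv_eq_right_inv (transvection_mul_transvection_neg hij α), ← mul_assoc, ← mul_assoc,
    dilation_mul_transvection hij, mul_assoc _ (dilation i μ), dilation_mul_dilation,
    mul_inv_cancel₀ hμ0, dilation_one, mul_one, transvection_mul_transvection_same (h := hij), hc]

def dilationConjugates (i : n) : Set (Matrix n n K) :=
  {A | ∃ (μ : K) (P : Matrix n n K), μ ≠ 0 ∧ μ ≠ 1 ∧ IsUnit P ∧ A = P * dilation i μ * P⁻¹}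

theorem conj_mem_dilationConjugates {i : n} {A Q : Matrix n n K}
    (hA : A ∈ dilationConjugates i) (hQ : IsUnit Q) : Q * A * Q⁻¹ ∈ dilationConjugates i := by
  obtain ⟨μ, P, hμ0, hμ1, hP, rfl⟩ := hA
  refine ⟨μ, Q * P, hμ0, hμ1, hQ.mul hP, ?_⟩
  rw [mul_inv_rev]
  simp only [Matrix.mul_assoc]

theorem dilation_mem_dilationConjugates (i j : n) {μ : K} (hμ0 : μ ≠ 0) (hμ1 : μ ≠ 1) :
    dilation j μ ∈ dilationConjugates i := by
  rw [← permMatrix_swap_mul_dilation_mul_inv i j μ]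
  exact ⟨μ, _, hμ0, hμ1, isUnit_permMatrix _, rfl⟩

theorem dilation_mem_closure_dilationConjugates (i j : n) {μ : K} (hμ0 : μ ≠ 0) :
    dilation j μ ∈ Submonoid.closure (dilationConjugates i) := by
  rcases eq_or_ne μ 1 with rfl | hμ1
  · rw [dilation_one]
    exact one_mem _
  · exact Submonoid.subset_closure (dilation_mem_dilationConjugates i j hμ0 hμ1)

theorem diagonal_mem_closure_dilationConjugates (i : n) {d : n → K} (hd : ∀ k, d k ≠ 0) :
    diagonal d ∈ Submonoid.closure (dilationConjugates i) := by
  suffices ∀ s : Finset n,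
      diagonal (s.piecewise d 1) ∈ Submonoid.closure (dilationConjugates i) by
    simpa using this Finset.univ
  intro s
  induction s using Finset.induction_on with
  | empty => simp
  | insert k s hk ih =>
    have h : diagonal ((insert k s).piecewise d 1) =
        dilation k (d k) * diagonal (s.piecewise d 1) := by
      rw [dilation_mul_diagonal, Finset.piecewise_eq_of_notMem _ _ _ hk, Pi.one_apply, mul_one,
        Finset.piecewise_insert]
    rw [h]
    exact mul_mem (dilation_mem_closure_dilationConjugates i k (hd k)) ih

theorem transvection_mem_closure_dilationConjugates {lam : K} (hl0 : lam ≠ 0) (hl1 : lam ≠ 1)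
    (i : n) (t : TransvectionStruct n K) :
    t.toMatrix ∈ Submonoid.closure (dilationConjugates i) := by
  obtain ⟨j, k, hjk, c⟩ := t
  rw [TransvectionStruct.toMatrix_mk, transvection_eq_dilation_mul_conj hjk hl0 hl1]
  have hconj := conj_mem_dilationConjugates
    (dilation_mem_dilationConjugates i j (inv_ne_zero hl0) (inv_ne_one.2 hl1))
    (isUnit_transvection hjk (c / (lam - 1)))
  exact mul_mem (dilation_mem_closure_dilationConjugates i j hl0) (Submonoid.subset_closure hconj)

theorem mem_closure_dilationConjugates {lam : K} (hl0 : lam ≠ 0) (hl1 : lam ≠ 1) (i : n)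
    {M : Matrix n n K} (hM : IsUnit M) : M ∈ Submonoid.closure (dilationConjugates i) := by
  refine diagonal_transvection_induction_of_det_ne_zero _ M
    ((isUnit_iff_isUnit_det M).1 hM).ne_zero
    (fun d hd => diagonal_mem_closure_dilationConjugates i fun k => ?_)
    (transvection_mem_closure_dilationConjugates hl0 hl1 i) (fun _ _ _ _ => mul_mem)
  rw [det_diagonal] at hd
  exact Finset.prod_ne_zero_iff.1 hd k (Finset.mem_univ k)

theorem exists_list_dilationConjugates_prod_eq {lam : K} (hl0 : lam ≠ 0) (hl1 : lam ≠ 1)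
    (i : n) {M : Matrix n n K} (hM : IsUnit M) :
    ∃ l : List (Matrix n n K), l ≠ [] ∧ (∀ A ∈ l, A ∈ dilationConjugates i) ∧ l.prod = M := by
  obtain ⟨l, hl, rfl⟩ :=
    Submonoid.exists_list_of_mem_closure (mem_closure_dilationConjugates hl0 hl1 i hM)
  -- the factor `D(λ) D(λ⁻¹) = 1` in front keeps the list nonempty when `M = 1`
  refine ⟨dilation i lam :: dilation i lam⁻¹ :: l, List.cons_ne_nil _ _, ?_, ?_⟩
  · simp only [List.forall_mem_cons]
    exact ⟨dilation_mem_dilationConjugates i i hl0 hl1,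
      dilation_mem_dilationConjugates i i (inv_ne_zero hl0) (inv_ne_one.2 hl1), hl⟩
  · rw [List.prod_cons, List.prod_cons, ← mul_assoc, dilation_mul_dilation,
      mul_inv_cancel₀ hl0, dilation_one, one_mul]

end Generation

end Matrix

open Matrix in
theorem GL3_generated_by_diagonalizable_conjugates (K : Type*) [Field K]
    (lam : K) (hl0 : lam ≠ 0) (hl1 : lam ≠ 1)
    (M : Matrix (Fin 3) (Fin 3) K) (hM : IsUnit M) :
    ∃ l : List (Matrix (Fin 3) (Fin 3) K), l ≠ [] ∧
      (∀ A ∈ l, ∃ (μ : K) (P : Matrix (Fin 3) (Fin 3) K), μ ≠ 0 ∧ μ ≠ 1 ∧ IsUnit P ∧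
        A = P * Matrix.diagonal ![μ, 1, 1] * P⁻¹) ∧ l.prod = M := by
  obtain ⟨l, hne, hl, rfl⟩ := exists_list_dilationConjugates_prod_eq hl0 hl1 (0 : Fin 3) hM
  refine ⟨l, hne, fun A hA => ?_, rfl⟩
  obtain ⟨μ, P, hμ0, hμ1, hP, rfl⟩ := hl A hA
  have hdil : update (1 : Fin 3 → K) 0 μ = ![μ, 1, 1] := by
    ext k
    fin_cases k <;> rfl
  exact ⟨μ, P, hμ0, hμ1, hP, by rw [dilation, hdil]⟩
end

section
/- Let K be a field and let H be a linear hyperplane of M_2(K). Then every matrix of M_2(K) is a product of two elements of H if and only if H is neither conjugate to H_0 := {M ∈ M_2(K) : M_{1,1} = 0} nor conjugate to the upper triangular matrices T_2^+(K) := {M ∈ M_2(K) : M_{2,1} = 0}. -/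
/-!
By nondegeneracy of the trace form, every hyperplane of `M₂(K)` is `{M | tr (A * M) = 0}` for some
`A ≠ 0`, and conjugating the hyperplane by `P` conjugates `A` by `P`. A singular `A ≠ 0` is similar
to a multiple of `E₁₁` (if `tr A ≠ 0`) or to `E₁₂` (if `A` is nilpotent), which give `H₀` and
`T₂⁺`; products of two matrices of `H₀` miss the antidiagonal swap, and `T₂⁺` is closed under
products. If `A` is invertible, choose an invertible traceless `N` with `tr (N * A * M * A) = 0`;
since `N * N = -det N • 1`, `M = (A⁻¹ * N) * (-(det N)⁻¹ • N * A * M)` with both factors in the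
hyperplane.
-/

open Set Pointwise Module

theorem Set.mul_self_eq_univ_iff {α : Type*} [Mul α] {S : Set α} :
    S * S = univ ↔ ∀ a, ∃ b ∈ S, ∃ c ∈ S, a = b * c := by
  simp only [eq_univ_iff_forall, mem_mul, eq_comm]

namespace Matrix

section Field

variable {n K : Type*} [Fintype n] [Field K]

def traceOrthogonal (A : Matrix n n K) : Submodule K (Matrix n n K) :=
  LinearMap.ker (traceLinearMap n K K ∘ₗ LinearMap.mulLeft K A)

@[simp]
theorem mem_traceOrthogonal {A M : Matrix n n K} : M ∈ traceOrthogonal A ↔ (A * M).trace = 0 :=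
  Iff.rfl

theorem traceOrthogonal_smul {A : Matrix n n K} {c : K} (hc : c ≠ 0) :
    traceOrthogonal (c • A) = traceOrthogonal A := by
  ext M
  simp [hc]

theorem coe_traceOrthogonal_single [DecidableEq n] (i j : n) :
    (traceOrthogonal (single i j (1 : K)) : Set (Matrix n n K)) = {M | M j i = 0} := by
  ext M
  simp [trace_single_mul]

theorem exists_traceLinearMap_comp_mulLeft_eq [DecidableEq n] (φ : Matrix n n K →ₗ[K] K) :
    ∃ A : Matrix n n K, traceLinearMap n K K ∘ₗ LinearMap.mulLeft K A = φ := by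
  refine ⟨of fun j i => φ (single i j 1), ext_linearMap K fun i j => LinearMap.ext fun a => ?_⟩
  have : single i j a = a • single i j (1 : K) := by rw [smul_single, smul_eq_mul, mul_one]
  simp only [LinearMap.comp_apply, singleLinearMap_apply, traceLinearMap_apply,
    LinearMap.mulLeft_apply, trace_mul_single]
  rw [this, map_smul]
  simp [mul_comm]

theorem exists_eq_traceOrthogonal [DecidableEq n] (H : Submodule K (Matrix n n K))
    (hH : finrank K H + 1 = Fintype.card n ^ 2) : ∃ A ≠ 0, H = traceOrthogonal A := by
  have hcard : finrank K (Matrix n n K) = Fintype.card n ^ 2 := by simp [finrank_matrix, sq]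
  obtain ⟨φ, hφ, hHφ⟩ := H.exists_le_ker_of_lt_top <| lt_top_iff_ne_top.2 fun h => by
    rw [h, finrank_top] at hH; omega
  obtain ⟨A, rfl⟩ := exists_traceLinearMap_comp_mulLeft_eq φ
  refine ⟨A, by rintro rfl; simp at hφ, Submodule.eq_of_le_of_finrank_le hHφ ?_⟩
  have := Submodule.finrank_lt (s := traceOrthogonal A) fun h => hφ (LinearMap.ker_eq_top.1 h)
  omega

theorem image_conj_traceOrthogonal [DecidableEq n] {A B P : Matrix n n K} (hP : IsUnit P)
    (h : A * P = P * B) :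
    (fun M => P * M * P⁻¹) '' traceOrthogonal B = traceOrthogonal A := by
  have hPd := (isUnit_iff_isUnit_det P).1 hP
  have key (M : Matrix n n K) : (A * (P * M * P⁻¹)).trace = (B * M).trace := by
    rw [← mul_assoc, ← mul_assoc, h, mul_assoc P, trace_mul_cycle,
      nonsing_inv_mul _ hPd, one_mul]
  ext M
  constructor
  · rintro ⟨M, hM, rfl⟩
    simpa [key] using hM
  · intro hM
    have hback : P * (P⁻¹ * M * P) * P⁻¹ = M := by
      rw [← mul_assoc, ← mul_assoc, mul_nonsing_inv _ hPd, one_mul,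
        mul_nonsing_inv_cancel_right _ _ hPd]
    refine ⟨P⁻¹ * M * P, ?_, hback⟩
    simpa [← key, hback] using hM

theorem isUnit_of_det_ne_zero [DecidableEq n] {P : Matrix n n K} (h : P.det ≠ 0) : IsUnit P :=
  (isUnit_iff_isUnit_det P).2 (isUnit_iff_ne_zero.2 h)

end Field

theorem image_conj_mul_self_eq_univ_iff {n R : Type*} [Fintype n] [DecidableEq n] [CommRing R]
    {P : Matrix n n R} (hP : IsUnit P) (S : Set (Matrix n n R)) :
    (fun M => P * M * P⁻¹) '' S * (fun M => P * M * P⁻¹) '' S = univ ↔ S * S = univ := by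
  set e := MulDistribMulAction.toMulAut (ConjAct (Matrix n n R)ˣ) (Matrix n n R)
    (ConjAct.toConjAct hP.unit)
  have hconj : (fun M => P * M * P⁻¹) = e := by
    funext M
    simp [e, ConjAct.units_smul_def, coe_units_inv]
  rw [hconj, ← image_mul]
  exact e.injective.image_injective.eq_iff' (image_univ_of_surjective e.surjective)

section Fin2

variable {R K : Type*} [CommRing R] [Nontrivial R] [Field K]

theorem setOf_entry_zero_zero_eq_zero_mul_self_ne_univ :
    {M : Matrix (Fin 2) (Fin 2) R | M 0 0 = 0} * {M | M 0 0 = 0} ≠ univ := by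
  intro h
  obtain ⟨B, hB : B 0 0 = 0, C, hC : C 0 0 = 0, hBC⟩ :=
    mem_mul.1 (h ▸ mem_univ !![(0 : R), 1; 1, 0])
  have h00 := congr_fun₂ hBC 0 0
  have h01 := congr_fun₂ hBC 0 1
  have h10 := congr_fun₂ hBC 1 0
  simp [mul_apply, hB, hC] at h00 h01 h10
  exact one_ne_zero (by linear_combination -h01 - B 0 1 * C 1 1 * h10 + C 1 1 * B 1 1 * h00 : (1 : R) = 0)

theorem setOf_entry_one_zero_eq_zero_mul_self_ne_univ :
    {M : Matrix (Fin 2) (Fin 2) R | M 1 0 = 0} * {M | M 1 0 = 0} ≠ univ := by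
  intro h
  obtain ⟨B, hB : B 1 0 = 0, C, hC : C 1 0 = 0, hBC⟩ :=
    mem_mul.1 (h ▸ mem_univ !![(0 : R), 0; 1, 0])
  have h10 := congr_fun₂ hBC 1 0
  simp [mul_apply, hB, hC] at h10

theorem mul_self_eq_neg_det_smul_one_of_trace_eq_zero {N : Matrix (Fin 2) (Fin 2) R}
    (hN : N.trace = 0) : N * N = -N.det • 1 := by
  have := aeval_self_charpoly N
  rw [charpoly_fin_two, hN] at this
  simpa [sq, Algebra.algebraMap_eq_smul_one, add_eq_zero_iff_eq_neg] using this

theorem exists_traceless_det_ne_zero_trace_mul_eq_zero (E : Matrix (Fin 2) (Fin 2) K) :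
    ∃ N : Matrix (Fin 2) (Fin 2) K, N.trace = 0 ∧ (N * E).trace = 0 ∧ N.det ≠ 0 := by
  by_cases h01 : E 0 1 = 0
  · by_cases h10 : E 1 0 = 0
    · refine ⟨!![0, 1; 1, 0], ?_, ?_, ?_⟩ <;> simp [trace_fin_two, vecMul, dotProduct, h01, h10]
    · refine ⟨!![E 1 0, E 1 1 - E 0 0; 0, -E 1 0], ?_, ?_, ?_⟩ <;>
        simp [trace_fin_two, vecMul, dotProduct, h10]
      ring
  · refine ⟨!![E 0 1, 0; E 1 1 - E 0 0, -E 0 1], ?_, ?_, ?_⟩ <;>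
      simp [trace_fin_two, vecMul, dotProduct, h01]
    ring

theorem traceOrthogonal_mul_self_eq_univ {A : Matrix (Fin 2) (Fin 2) K} (hA : IsUnit A) :
    (traceOrthogonal A : Set (Matrix (Fin 2) (Fin 2) K)) * (traceOrthogonal A : Set _) = univ := by
  have hAd := (isUnit_iff_isUnit_det A).1 hA
  refine eq_univ_of_forall fun M => ?_
  obtain ⟨N, hN, hNM, hNd⟩ := exists_traceless_det_ne_zero_trace_mul_eq_zero (A * M * A)
  refine mem_mul.2 ⟨A⁻¹ * N, ?_, -N.det⁻¹ • (N * A * M), ?_, ?_⟩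
  · simp [mul_nonsing_inv_cancel_left _ _ hAd, hN]
  · rw [SetLike.mem_coe, mem_traceOrthogonal, Matrix.mul_smul, trace_smul, trace_mul_comm,
      mul_assoc, mul_assoc, ← mul_assoc A, hNM, smul_zero]
  · rw [Matrix.mul_smul, show A⁻¹ * N * (N * A * M) = A⁻¹ * (N * N) * A * M by noncomm_ring,
      mul_self_eq_neg_det_smul_one_of_trace_eq_zero hN]
    simp [smul_smul, hNd, nonsing_inv_mul _ hAd]

theorem exists_mul_eq_mul_smul_single_of_det_eq_zero {A : Matrix (Fin 2) (Fin 2) K}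
    (hdet : A.det = 0) (htr : A.trace ≠ 0) :
    ∃ P : Matrix (Fin 2) (Fin 2) K, IsUnit P ∧ A * P = P * (A.trace • single 0 0 1) := by
  -- The columns of `P` are a column of `A` (an eigenvector for `tr A`, as `A * A = tr A • A`)
  -- and a vector of `ker A`.
  obtain ⟨p, q, r, s, rfl⟩ : ∃ p q r s : K, A = !![p, q; r, s] := ⟨_, _, _, _, eta_fin_two A⟩
  rw [det_fin_two_of] at hdet
  rw [trace_fin_two_of] at htr ⊢
  by_cases hp : p = 0
  · subst hp
    refine ⟨!![q, s; s, -r], isUnit_of_det_ne_zero (by simp [det_fin_two_of]; grind), ?_⟩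
    ext i j; fin_cases i <;> fin_cases j <;> simp <;> grind
  · refine ⟨!![p, -q; r, p], isUnit_of_det_ne_zero (by rw [det_fin_two_of]; grind), ?_⟩
    ext i j; fin_cases i <;> fin_cases j <;> simp <;> grind

theorem exists_mul_eq_mul_single_of_det_eq_zero_of_trace_eq_zero {A : Matrix (Fin 2) (Fin 2) K}
    (hA : A ≠ 0) (hdet : A.det = 0) (htr : A.trace = 0) :
    ∃ P : Matrix (Fin 2) (Fin 2) K, IsUnit P ∧ A * P = P * single 0 1 1 := by
  -- `P = [A x | x]` for a basis vector `x` with `A x ≠ 0`.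
  obtain ⟨p, q, r, s, rfl⟩ : ∃ p q r s : K, A = !![p, q; r, s] := ⟨_, _, _, _, eta_fin_two A⟩
  rw [det_fin_two_of] at hdet
  rw [trace_fin_two_of] at htr
  by_cases hq : q = 0
  · by_cases hr : r = 0
    · subst hq hr
      have hp : p = 0 := pow_eq_zero_iff two_ne_zero |>.1 (by linear_combination p * htr - hdet)
      have hs : s = 0 := by linear_combination htr - hp
      exact (hA (by simp [hp, hs, ← Matrix.ext_iff, Fin.forall_fin_two])).elim
    refine ⟨!![p, 1; r, 0], isUnit_of_det_ne_zero (by simpa [det_fin_two_of]), ?_⟩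
    ext i j; fin_cases i <;> fin_cases j <;> simp <;> grind
  · refine ⟨!![q, 0; s, 1], isUnit_of_det_ne_zero (by simpa [det_fin_two_of]), ?_⟩
    ext i j; fin_cases i <;> fin_cases j <;> simp <;> grind

end Fin2

end Matrix

open Matrix

theorem hyperplane_M2_product_iff (K : Type*) [Field K]
    (H : Submodule K (Matrix (Fin 2) (Fin 2) K)) (hH : Module.finrank K H = 3) :
    (∀ M : Matrix (Fin 2) (Fin 2) K, ∃ B ∈ H, ∃ C ∈ H, M = B * C) ↔
      (¬ ∃ P : Matrix (Fin 2) (Fin 2) K, IsUnit P ∧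
        (H : Set (Matrix (Fin 2) (Fin 2) K)) =
          (fun M => P * M * P⁻¹) '' {M : Matrix (Fin 2) (Fin 2) K | M 0 0 = 0}) ∧
      (¬ ∃ P : Matrix (Fin 2) (Fin 2) K, IsUnit P ∧
        (H : Set (Matrix (Fin 2) (Fin 2) K)) =
          (fun M => P * M * P⁻¹) '' {M : Matrix (Fin 2) (Fin 2) K | M 1 0 = 0}) := by
  obtain ⟨A, hA, rfl⟩ := exists_eq_traceOrthogonal H (by simp [hH])
  refine (Set.mul_self_eq_univ_iff (S := (traceOrthogonal A : Set (Matrix (Fin 2) (Fin 2) K)))).symm.trans ?_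
  refine ⟨fun hprod => ⟨?_, ?_⟩, fun ⟨h00, h10⟩ => ?_⟩
  · rintro ⟨P, hP, hAP⟩
    rw [hAP, image_conj_mul_self_eq_univ_iff hP] at hprod
    exact setOf_entry_zero_zero_eq_zero_mul_self_ne_univ hprod
  · rintro ⟨P, hP, hAP⟩
    rw [hAP, image_conj_mul_self_eq_univ_iff hP] at hprod
    exact setOf_entry_one_zero_eq_zero_mul_self_ne_univ hprod
  by_cases hAu : IsUnit A
  · exact traceOrthogonal_mul_self_eq_univ hAu
  have hdet : A.det = 0 := by rwa [isUnit_iff_isUnit_det, isUnit_iff_ne_zero, not_not] at hAu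
  by_cases htr : A.trace = 0
  · obtain ⟨P, hP, hAP⟩ := exists_mul_eq_mul_single_of_det_eq_zero_of_trace_eq_zero hA hdet htr
    exact (h10 ⟨P, hP, by rw [← image_conj_traceOrthogonal hP hAP, coe_traceOrthogonal_single]⟩).elim
  · obtain ⟨P, hP, hAP⟩ := exists_mul_eq_mul_smul_single_of_det_eq_zero hdet htr
    exact (h00 ⟨P, hP, by
      rw [← image_conj_traceOrthogonal hP hAP, traceOrthogonal_smul htr,
        coe_traceOrthogonal_single]⟩).elim
end
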